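/- arXiv:1402.7226 — 5 statements merged into one kernel-verified Lean document; each statement's English description precedes it below -/
import Mathlib

section
/- Conversely, let (θ, L₁, L₂, L₃) be a Lie 2-algebra which decomposes as a direct sum of a Lie 2-subalgebra g and an ideal m. Then the maps φ₀(x) + l_{φ₀(x)} = L₂(x,·) + L₃(x,·,·) for x ∈ g₀, φ₁(a) = L₂(a,·) for a ∈ g₁, and φ₂(x,y) = −L₃(x,y,·) define an action φ of g on m by derivations such that θ is isomorphic to the crossed product g ▷_φ m. -/
universe u

/-- Raw data of a Lie 2-algebra: a 2-term complex `g1 → g0` with a binary bracket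
(`l2` on degree 0, `l2m` mixed) and a Jacobiator `l3`. -/
structure LieTwoStr (g0 g1 : Type u) : Type u where
  d : g1 → g0
  l2 : g0 → g0 → g0
  l2m : g0 → g1 → g1
  l3 : g0 → g0 → g0 → g1

/-- Raw data of a homomorphism of Lie 2-algebras. -/
structure TwoHom (g0 g1 h0 h1 : Type u) : Type u where
  f0 : g0 → h0
  f1 : g1 → h1
  f2 : g0 → g0 → h1

/-- Raw data of an action of a Lie 2-algebra on a 2-term complex `m1 → m0`. -/
structure TwoAction (g0 g1 m0 m1 : Type u) : Type u where
  r0 : g0 → m0 → m0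
  r0' : g0 → m1 → m1
  r1 : g1 → m0 → m1
  r2 : g0 → g0 → m0 → m1

variable (K : Type u) [Field K]
variable {g0 g1 h0 h1 m0 m1 : Type u}
  [AddCommGroup g0] [Module K g0] [AddCommGroup g1] [Module K g1]
  [AddCommGroup h0] [Module K h0] [AddCommGroup h1] [Module K h1]
  [AddCommGroup m0] [Module K m0] [AddCommGroup m1] [Module K m1]

/-- The 2-term `L∞`-algebra axioms (Lie 2-algebra). -/
def IsLieTwoAlgebra (L : LieTwoStr g0 g1) : Prop :=
  IsLinearMap K L.d ∧
  (∀ x, IsLinearMap K (L.l2 x)) ∧ (∀ y, IsLinearMap K (fun x => L.l2 x y)) ∧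
  (∀ x, IsLinearMap K (L.l2m x)) ∧ (∀ a, IsLinearMap K (fun x => L.l2m x a)) ∧
  (∀ x y, IsLinearMap K (L.l3 x y)) ∧ (∀ x z, IsLinearMap K (fun y => L.l3 x y z)) ∧
  (∀ y z, IsLinearMap K (fun x => L.l3 x y z)) ∧
  (∀ x y, L.l2 x y = - L.l2 y x) ∧
  (∀ x y z, L.l3 x y z = - L.l3 y x z) ∧
  (∀ x y z, L.l3 x y z = - L.l3 x z y) ∧
  (∀ x a, L.d (L.l2m x a) = L.l2 x (L.d a)) ∧
  (∀ a b, L.l2m (L.d a) b = - L.l2m (L.d b) a) ∧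
  (∀ x y z, L.d (L.l3 x y z) =
    L.l2 x (L.l2 y z) - L.l2 y (L.l2 x z) - L.l2 (L.l2 x y) z) ∧
  (∀ x y a, L.l3 x y (L.d a) =
    L.l2m x (L.l2m y a) - L.l2m y (L.l2m x a) - L.l2m (L.l2 x y) a) ∧
  (∀ x y z w,
    L.l2m x (L.l3 y z w) - L.l2m y (L.l3 x z w) + L.l2m z (L.l3 x y w)
      - L.l2m w (L.l3 x y z)
    = L.l3 (L.l2 x y) z w - L.l3 (L.l2 x z) y w + L.l3 (L.l2 x w) y z
      + L.l3 (L.l2 y z) x w - L.l3 (L.l2 y w) x z + L.l3 (L.l2 z w) x y)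

/-- The axioms of a homomorphism of Lie 2-algebras. -/
def IsHom (L : LieTwoStr g0 g1) (L' : LieTwoStr h0 h1) (f : TwoHom g0 g1 h0 h1) : Prop :=
  IsLinearMap K f.f0 ∧ IsLinearMap K f.f1 ∧
  (∀ x, IsLinearMap K (f.f2 x)) ∧ (∀ y, IsLinearMap K (fun x => f.f2 x y)) ∧
  (∀ x y, f.f2 x y = - f.f2 y x) ∧
  (∀ a, L'.d (f.f1 a) = f.f0 (L.d a)) ∧
  (∀ x y, f.f0 (L.l2 x y) - L'.l2 (f.f0 x) (f.f0 y) = L'.d (f.f2 x y)) ∧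
  (∀ x a, f.f1 (L.l2m x a) - L'.l2m (f.f0 x) (f.f1 a) = f.f2 x (L.d a)) ∧
  (∀ x y z,
    L'.l2m (f.f0 x) (f.f2 y z) + L'.l2m (f.f0 y) (f.f2 z x) + L'.l2m (f.f0 z) (f.f2 x y)
      + L'.l3 (f.f0 x) (f.f0 y) (f.f0 z)
    = f.f2 (L.l2 x y) z + f.f2 (L.l2 y z) x + f.f2 (L.l2 z x) y + f.f1 (L.l3 x y z))

/-- An action of a Lie 2-algebra `L` on a 2-term complex `dm : m1 → m0`,
i.e. a Lie 2-algebra homomorphism `L → End(m)`. -/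
def IsAction (L : LieTwoStr g0 g1) (dm : m1 → m0) (A : TwoAction g0 g1 m0 m1) : Prop :=
  (∀ x, IsLinearMap K (A.r0 x)) ∧ (∀ α, IsLinearMap K (fun x => A.r0 x α)) ∧
  (∀ x, IsLinearMap K (A.r0' x)) ∧ (∀ ξ, IsLinearMap K (fun x => A.r0' x ξ)) ∧
  (∀ a, IsLinearMap K (A.r1 a)) ∧ (∀ α, IsLinearMap K (fun a => A.r1 a α)) ∧
  (∀ x y, IsLinearMap K (A.r2 x y)) ∧ (∀ x α, IsLinearMap K (fun y => A.r2 x y α)) ∧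
  (∀ y α, IsLinearMap K (fun x => A.r2 x y α)) ∧
  (∀ x y α, A.r2 x y α = - A.r2 y x α) ∧
  (∀ x ξ, dm (A.r0' x ξ) = A.r0 x (dm ξ)) ∧
  (∀ a α, A.r0 (L.d a) α = dm (A.r1 a α)) ∧
  (∀ a ξ, A.r0' (L.d a) ξ = A.r1 a (dm ξ)) ∧
  (∀ x y α, A.r0 (L.l2 x y) α - A.r0 x (A.r0 y α) + A.r0 y (A.r0 x α) = dm (A.r2 x y α)) ∧
  (∀ x y ξ, A.r0' (L.l2 x y) ξ - A.r0' x (A.r0' y ξ) + A.r0' y (A.r0' x ξ)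
      = A.r2 x y (dm ξ)) ∧
  (∀ x a α, A.r1 (L.l2m x a) α - A.r0' x (A.r1 a α) + A.r1 a (A.r0 x α)
      = A.r2 x (L.d a) α) ∧
  (∀ x y z α,
    A.r0' x (A.r2 y z α) - A.r2 y z (A.r0 x α)
      + A.r0' y (A.r2 z x α) - A.r2 z x (A.r0 y α)
      + A.r0' z (A.r2 x y α) - A.r2 x y (A.r0 z α)
    = A.r2 (L.l2 x y) z α + A.r2 (L.l2 y z) x α + A.r2 (L.l2 z x) y α
      + A.r1 (L.l3 x y z) α)

/-- A degree-0 derivation `(X0, X1, lX)` of a Lie 2-algebra `M`. -/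
def IsDer0 (M : LieTwoStr m0 m1) (X0 : m0 → m0) (X1 : m1 → m1) (lX : m0 → m0 → m1) : Prop :=
  (∀ ξ, M.d (X1 ξ) = X0 (M.d ξ)) ∧
  (∀ α β, M.d (lX α β) = X0 (M.l2 α β) - M.l2 (X0 α) β - M.l2 α (X0 β)) ∧
  (∀ α ξ, lX α (M.d ξ) = X1 (M.l2m α ξ) - M.l2m (X0 α) ξ - M.l2m α (X1 ξ)) ∧
  (∀ α β γ, X1 (M.l3 α β γ) =
    lX α (M.l2 β γ) + M.l2m α (lX β γ) + M.l3 (X0 α) β γ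
      + lX β (M.l2 γ α) + M.l2m β (lX γ α) + M.l3 α (X0 β) γ
      + lX γ (M.l2 α β) + M.l2m γ (lX α β) + M.l3 α β (X0 γ))

/-- An action of the Lie 2-algebra `L` on the Lie 2-algebra `M` by derivations:
an action together with maps `lφ x : ∧²m0 → m1` such that each `φ0(x) + l_{φ0(x)}`
is a degree-0 derivation of `M` and `(φ0 + l_{φ0}, φ1, φ2) : L → Der(M)` is a
Lie 2-algebra homomorphism. -/
def IsActionByDerivations (L : LieTwoStr g0 g1) (M : LieTwoStr m0 m1)
    (A : TwoAction g0 g1 m0 m1) (lφ : g0 → m0 → m0 → m1) : Prop :=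
  IsAction K L M.d A ∧
  (∀ x, IsDer0 M (A.r0 x) (A.r0' x) (lφ x)) ∧
  (∀ x α, IsLinearMap K (lφ x α)) ∧ (∀ x β, IsLinearMap K (fun α => lφ x α β)) ∧
  (∀ α β, IsLinearMap K (fun x => lφ x α β)) ∧
  (∀ x α β, lφ x α β = - lφ x β α) ∧
  (∀ a α β, lφ (L.d a) α β =
    A.r1 a (M.l2 α β) - M.l2m α (A.r1 a β) + M.l2m β (A.r1 a α)) ∧
  (∀ x y α β, lφ (L.l2 x y) α β
      - (A.r0' x (lφ y α β) - lφ y (A.r0 x α) β - lφ y α (A.r0 x β))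
      + (A.r0' y (lφ x α β) - lφ x (A.r0 y α) β - lφ x α (A.r0 y β))
    = A.r2 x y (M.l2 α β) - M.l2m α (A.r2 x y β) + M.l2m β (A.r2 x y α))

variable {K}

/-- The abelian (trivial) Lie 2-algebra structure on a 2-term complex. -/
def abelianTwo (dm : m1 → m0) : LieTwoStr m0 m1 where
  d := dm
  l2 := fun _ _ => 0
  l2m := fun _ _ => 0
  l3 := fun _ _ _ => 0

/-- The crossed product `g ▷_φ m` of Lie 2-algebras. -/
def crossedProduct (L : LieTwoStr g0 g1) (M : LieTwoStr m0 m1)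
    (A : TwoAction g0 g1 m0 m1) (lφ : g0 → m0 → m0 → m1) :
    LieTwoStr (g0 × m0) (g1 × m1) where
  d q := (L.d q.1, M.d q.2)
  l2 p q := (L.l2 p.1 q.1, M.l2 p.2 q.2 + A.r0 p.1 q.2 - A.r0 q.1 p.2)
  l2m p q := (L.l2m p.1 q.1, M.l2m p.2 q.2 + A.r0' p.1 q.2 - A.r1 q.1 p.2)
  l3 p q r := (L.l3 p.1 q.1 r.1,
    M.l3 p.2 q.2 r.2 - A.r2 p.1 q.1 r.2 - A.r2 q.1 r.1 p.2 - A.r2 r.1 p.1 q.2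
      + lφ p.1 q.2 r.2 + lφ q.1 r.2 p.2 + lφ r.1 p.2 q.2)

variable (K)

/-- A crossed module of Lie 2-algebras `(m, g, φ, ϕ, σ)`. -/
def IsCrossedModule (L : LieTwoStr g0 g1) (M : LieTwoStr m0 m1)
    (A : TwoAction g0 g1 m0 m1) (lφ : g0 → m0 → m0 → m1)
    (p0 : m0 → g0) (p1 : m1 → g1) (p2 : m0 → m0 → g1) (σ : g0 → m0 → g1) : Prop :=
  IsLieTwoAlgebra K L ∧ IsLieTwoAlgebra K M ∧
  IsActionByDerivations K L M A lφ ∧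
  IsHom K M L ⟨p0, p1, p2⟩ ∧
  (∀ x, IsLinearMap K (σ x)) ∧ (∀ α, IsLinearMap K (fun x => σ x α)) ∧
  -- the homomorphism property of Π = Id + σ + ϕ on the crossed product
  (∀ x α, p0 (A.r0 x α) - L.l2 x (p0 α) = L.d (σ x α)) ∧
  (∀ a α, p1 (A.r1 a α) + L.l2m (p0 α) a = σ (L.d a) α) ∧
  (∀ x ξ, p1 (A.r0' x ξ) - L.l2m x (p1 ξ) = σ x (M.d ξ)) ∧
  (∀ x y α, - L.l2m x (σ y α) + L.l2m y (σ x α) + σ (L.l2 x y) α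
      - σ x (A.r0 y α) + σ y (A.r0 x α)
    = L.l3 x y (p0 α) + p1 (A.r2 x y α)) ∧
  -- conditions (i)-(iv)
  (∀ α β, M.l2 α β = A.r0 (p0 α) β) ∧
  (∀ α ξ, M.l2m α ξ = A.r0' (p0 α) ξ) ∧
  (∀ ξ α, A.r1 (p1 ξ) α = - M.l2m α ξ) ∧
  (∀ α β γ, M.l3 α β γ = - A.r2 (p0 α) (p0 β) γ - A.r1 (σ (p0 α) β) γ) ∧
  (∀ x β γ, lφ x β γ = - A.r2 x (p0 β) γ - A.r1 (σ x β) γ) ∧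
  (∀ α β, p2 α β = σ (p0 α) β) ∧
  (∀ α β, p2 α β = - σ (p0 β) α)

/-- Restriction of a Lie 2-algebra structure on `g ⊕ m` to the subalgebra `g`. -/
def gRes (T : LieTwoStr (g0 × m0) (g1 × m1)) : LieTwoStr g0 g1 where
  d a := (T.d (a, 0)).1
  l2 x y := (T.l2 (x, 0) (y, 0)).1
  l2m x a := (T.l2m (x, 0) (a, 0)).1
  l3 x y z := (T.l3 (x, 0) (y, 0) (z, 0)).1

/-- Restriction of a Lie 2-algebra structure on `g ⊕ m` to the ideal `m`. -/
def mRes (T : LieTwoStr (g0 × m0) (g1 × m1)) : LieTwoStr m0 m1 where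
  d ξ := (T.d (0, ξ)).2
  l2 α β := (T.l2 (0, α) (0, β)).2
  l2m α ξ := (T.l2m (0, α) (0, ξ)).2
  l3 α β γ := (T.l3 (0, α) (0, β) (0, γ)).2

/-- The action `φ₀(x) = L₂(x,·)`, `φ₁(a) = L₂(a,·)`, `φ₂(x,y) = −L₃(x,y,·)` of `g`
on `m` extracted from a Lie 2-algebra structure on `g ⊕ m`. -/
def aRes (T : LieTwoStr (g0 × m0) (g1 × m1)) : TwoAction g0 g1 m0 m1 where
  r0 x α := (T.l2 (x, 0) (0, α)).2
  r0' x ξ := (T.l2m (x, 0) (0, ξ)).2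
  r1 a α := -(T.l2m ((0 : g0), α) (a, 0)).2
  r2 x y α := -(T.l3 (x, 0) (y, 0) ((0 : g0), α)).2

/-- The maps `l_{φ₀(x)} = L₃(x,·,·)` extracted from the structure on `g ⊕ m`. -/
def lphiRes (T : LieTwoStr (g0 × m0) (g1 × m1)) : g0 → m0 → m0 → m1 :=
  fun x α β => (T.l3 (x, 0) ((0 : g0), α) ((0 : g0), β)).2


private theorem cancel_aux {A : Type u} [AddCommGroup A] {a b c d : A}
    (h : c = d) (h2 : a - b = c - d) : a = b := by
  have h3 : a - b = 0 := by rw [h2, h, sub_self]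
  exact sub_eq_zero.mp h3

private theorem lieTwoStr_ext {a0 a1 : Type u} {S S' : LieTwoStr a0 a1}
    (h1 : S.d = S'.d) (h2 : S.l2 = S'.l2) (h3 : S.l2m = S'.l2m) (h4 : S.l3 = S'.l3) :
    S = S' := by
  cases S; cases S'; cases h1; cases h2; cases h3; cases h4; rfl

/-- If a Lie 2-algebra `θ` decomposes as a direct sum of a Lie
2-subalgebra `g` and an ideal `m`, then `φ₀(x)+l_{φ₀(x)} = L₂(x,·)+L₃(x,·,·)`,
`φ₁(a) = L₂(a,·)`, `φ₂(x,y) = −L₃(x,y,·)` define an action of `g` on `m` by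
derivations, and `θ` is (equal to) the crossed product `g ▷_φ m`. -/
theorem decomposition_gives_action_by_derivations
    (T : LieTwoStr (g0 × m0) (g1 × m1)) (hT : IsLieTwoAlgebra K T)
    -- g is a Lie 2-subalgebra
    (hg2 : ∀ x y : g0, (T.l2 (x, 0) (y, 0)).2 = 0)
    (hg2m : ∀ (x : g0) (a : g1), (T.l2m (x, 0) (a, 0)).2 = 0)
    (hgd : ∀ a : g1, (T.d (a, 0)).2 = 0)
    (hg3 : ∀ x y z : g0, (T.l3 (x, 0) (y, 0) (z, 0)).2 = 0)
    -- m is an ideal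
    (hmd : ∀ ξ : m1, (T.d ((0 : g1), ξ)).1 = 0)
    (hm2 : ∀ (α : m0) (q : g0 × m0), (T.l2 ((0 : g0), α) q).1 = 0)
    (hm2m : ∀ (α : m0) (b : g1 × m1), (T.l2m ((0 : g0), α) b).1 = 0)
    (hm2m' : ∀ (p : g0 × m0) (ξ : m1), (T.l2m p ((0 : g1), ξ)).1 = 0)
    (hm3 : ∀ (α : m0) (q r : g0 × m0), (T.l3 ((0 : g0), α) q r).1 = 0) :
    IsLieTwoAlgebra K (gRes T) ∧
    IsLieTwoAlgebra K (mRes T) ∧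
    IsActionByDerivations K (gRes T) (mRes T) (aRes T) (lphiRes T) ∧
    T = crossedProduct (gRes T) (mRes T) (aRes T) (lphiRes T) := by

  obtain ⟨hd, h2r, h2l, h2mr, h2ml, h3c, h3b, h3a, a2, a3ab, a3bc, cdc, cdm2, J0, J1, J2⟩ := hT
  have cyc : ∀ p q r, T.l3 p q r = T.l3 r p q := by
    intro p q r
    rw [a3ab r p q, a3bc p r q, neg_neg]
  -- component lemmas
  have cdg : ∀ a : g1, T.d (a, (0:m1)) = ((gRes T).d a, 0) := fun a => Prod.ext rfl (hgd a)
  have cdmm : ∀ ξ : m1, T.d ((0:g1), ξ) = (0, (mRes T).d ξ) := fun ξ => Prod.ext (hmd ξ) rfl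
  have c2gg : ∀ x y : g0, T.l2 (x, (0:m0)) (y, 0) = ((gRes T).l2 x y, 0) :=
    fun x y => Prod.ext rfl (hg2 x y)
  have c2mm : ∀ α β : m0, T.l2 ((0:g0), α) (0, β) = (0, (mRes T).l2 α β) :=
    fun α β => Prod.ext (hm2 α _) rfl
  have c2gm : ∀ (x : g0) (α : m0), T.l2 (x, (0:m0)) ((0:g0), α) = (0, (aRes T).r0 x α) :=
    fun x α => Prod.ext (by rw [a2]; simp [hm2]) rfl
  have c2mg : ∀ (α : m0) (y : g0), T.l2 ((0:g0), α) (y, (0:m0)) = (0, -(aRes T).r0 y α) :=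
    fun α y => Prod.ext (hm2 α _) (by rw [a2]; simp [aRes])
  have c2m_gg : ∀ (x : g0) (a : g1), T.l2m (x, (0:m0)) (a, (0:m1)) = ((gRes T).l2m x a, 0) :=
    fun x a => Prod.ext rfl (hg2m x a)
  have c2m_mm : ∀ (α : m0) (ξ : m1), T.l2m ((0:g0), α) ((0:g1), ξ) = (0, (mRes T).l2m α ξ) :=
    fun α ξ => Prod.ext (hm2m α _) rfl
  have c2m_gm : ∀ (x : g0) (ξ : m1), T.l2m (x, (0:m0)) ((0:g1), ξ) = (0, (aRes T).r0' x ξ) :=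
    fun x ξ => Prod.ext (hm2m' _ ξ) rfl
  have c2m_mg : ∀ (α : m0) (a : g1), T.l2m ((0:g0), α) (a, (0:m1)) = (0, -(aRes T).r1 a α) :=
    fun α a => Prod.ext (hm2m α _) (by simp [aRes])
  have c3ggg : ∀ x y z : g0, T.l3 (x, (0:m0)) (y, 0) (z, 0) = ((gRes T).l3 x y z, 0) :=
    fun x y z => Prod.ext rfl (hg3 x y z)
  have c3mmm : ∀ α β γ : m0, T.l3 ((0:g0), α) (0, β) (0, γ) = (0, (mRes T).l3 α β γ) :=
    fun α β γ => Prod.ext (hm3 α _ _) rfl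
  have c3ggm : ∀ (x y : g0) (α : m0),
      T.l3 (x, (0:m0)) (y, 0) ((0:g0), α) = (0, -(aRes T).r2 x y α) :=
    fun x y α => Prod.ext (by rw [cyc]; exact hm3 α _ _) (by simp [aRes])
  have c3gmg : ∀ (x : g0) (β : m0) (z : g0),
      T.l3 (x, (0:m0)) ((0:g0), β) (z, 0) = (0, (aRes T).r2 x z β) := by
    intro x β z
    rw [a3bc, c3ggm]
    simp
  have c3mgg : ∀ (α : m0) (y z : g0),
      T.l3 ((0:g0), α) (y, (0:m0)) (z, 0) = (0, -(aRes T).r2 y z α) :=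
    fun α y z => ((cyc (y, 0) (z, 0) ((0:g0), α)).symm).trans (c3ggm y z α)
  have c3gmm : ∀ (x : g0) (β γ : m0),
      T.l3 (x, (0:m0)) ((0:g0), β) ((0:g0), γ) = (0, lphiRes T x β γ) :=
    fun x β γ => Prod.ext (by rw [cyc]; exact hm3 γ _ _) rfl
  have c3mmg : ∀ (α β : m0) (z : g0),
      T.l3 ((0:g0), α) ((0:g0), β) (z, (0:m0)) = (0, lphiRes T z α β) :=
    fun α β z => (cyc ((0:g0), α) ((0:g0), β) (z, 0)).trans (c3gmm z α β)
  have c3mgm : ∀ (α : m0) (y : g0) (γ : m0),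
      T.l3 ((0:g0), α) (y, (0:m0)) ((0:g0), γ) = (0, -lphiRes T y α γ) := by
    intro α y γ
    rw [a3ab, c3gmm]
    simp
  -- linearity
  have Gd_lin : IsLinearMap K (gRes T).d :=
    ((LinearMap.fst K g0 m0).comp ((IsLinearMap.mk' _ hd).comp (LinearMap.inl K g1 m1))).isLinear
  have Gl2r : ∀ x, IsLinearMap K ((gRes T).l2 x) := fun x =>
    ((LinearMap.fst K g0 m0).comp ((IsLinearMap.mk' _ (h2r (x, 0))).comp (LinearMap.inl K g0 m0))).isLinear
  have Gl2l : ∀ y, IsLinearMap K (fun x => (gRes T).l2 x y) := fun y =>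
    ((LinearMap.fst K g0 m0).comp ((IsLinearMap.mk' _ (h2l (y, 0))).comp (LinearMap.inl K g0 m0))).isLinear
  have Gl2mr : ∀ x, IsLinearMap K ((gRes T).l2m x) := fun x =>
    ((LinearMap.fst K g1 m1).comp ((IsLinearMap.mk' _ (h2mr (x, 0))).comp (LinearMap.inl K g1 m1))).isLinear
  have Gl2ml : ∀ a, IsLinearMap K (fun x => (gRes T).l2m x a) := fun a =>
    ((LinearMap.fst K g1 m1).comp ((IsLinearMap.mk' _ (h2ml (a, 0))).comp (LinearMap.inl K g0 m0))).isLinear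
  have Gl3c : ∀ x y, IsLinearMap K ((gRes T).l3 x y) := fun x y =>
    ((LinearMap.fst K g1 m1).comp ((IsLinearMap.mk' _ (h3c (x, 0) (y, 0))).comp (LinearMap.inl K g0 m0))).isLinear
  have Gl3b : ∀ x z, IsLinearMap K (fun y => (gRes T).l3 x y z) := fun x z =>
    ((LinearMap.fst K g1 m1).comp ((IsLinearMap.mk' _ (h3b (x, 0) (z, 0))).comp (LinearMap.inl K g0 m0))).isLinear
  have Gl3a : ∀ y z, IsLinearMap K (fun x => (gRes T).l3 x y z) := fun y z =>
    ((LinearMap.fst K g1 m1).comp ((IsLinearMap.mk' _ (h3a (y, 0) (z, 0))).comp (LinearMap.inl K g0 m0))).isLinear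
  have Md_lin : IsLinearMap K (mRes T).d :=
    ((LinearMap.snd K g0 m0).comp ((IsLinearMap.mk' _ hd).comp (LinearMap.inr K g1 m1))).isLinear
  have Ml2r : ∀ α, IsLinearMap K ((mRes T).l2 α) := fun α =>
    ((LinearMap.snd K g0 m0).comp ((IsLinearMap.mk' _ (h2r ((0:g0), α))).comp (LinearMap.inr K g0 m0))).isLinear
  have Ml2l : ∀ β, IsLinearMap K (fun α => (mRes T).l2 α β) := fun β =>
    ((LinearMap.snd K g0 m0).comp ((IsLinearMap.mk' _ (h2l ((0:g0), β))).comp (LinearMap.inr K g0 m0))).isLinear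
  have Ml2mr : ∀ α, IsLinearMap K ((mRes T).l2m α) := fun α =>
    ((LinearMap.snd K g1 m1).comp ((IsLinearMap.mk' _ (h2mr ((0:g0), α))).comp (LinearMap.inr K g1 m1))).isLinear
  have Ml2ml : ∀ ξ, IsLinearMap K (fun α => (mRes T).l2m α ξ) := fun ξ =>
    ((LinearMap.snd K g1 m1).comp ((IsLinearMap.mk' _ (h2ml ((0:g1), ξ))).comp (LinearMap.inr K g0 m0))).isLinear
  have Ml3c : ∀ α β, IsLinearMap K ((mRes T).l3 α β) := fun α β =>
    ((LinearMap.snd K g1 m1).comp ((IsLinearMap.mk' _ (h3c ((0:g0), α) ((0:g0), β))).comp (LinearMap.inr K g0 m0))).isLinear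
  have Ml3b : ∀ α γ, IsLinearMap K (fun β => (mRes T).l3 α β γ) := fun α γ =>
    ((LinearMap.snd K g1 m1).comp ((IsLinearMap.mk' _ (h3b ((0:g0), α) ((0:g0), γ))).comp (LinearMap.inr K g0 m0))).isLinear
  have Ml3a : ∀ β γ, IsLinearMap K (fun α => (mRes T).l3 α β γ) := fun β γ =>
    ((LinearMap.snd K g1 m1).comp ((IsLinearMap.mk' _ (h3a ((0:g0), β) ((0:g0), γ))).comp (LinearMap.inr K g0 m0))).isLinear
  have Ar0r : ∀ x, IsLinearMap K ((aRes T).r0 x) := fun x =>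
    ((LinearMap.snd K g0 m0).comp ((IsLinearMap.mk' _ (h2r (x, 0))).comp (LinearMap.inr K g0 m0))).isLinear
  have Ar0l : ∀ α, IsLinearMap K (fun x => (aRes T).r0 x α) := fun α =>
    ((LinearMap.snd K g0 m0).comp ((IsLinearMap.mk' _ (h2l ((0:g0), α))).comp (LinearMap.inl K g0 m0))).isLinear
  have Ar0'r : ∀ x, IsLinearMap K ((aRes T).r0' x) := fun x =>
    ((LinearMap.snd K g1 m1).comp ((IsLinearMap.mk' _ (h2mr (x, 0))).comp (LinearMap.inr K g1 m1))).isLinear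
  have Ar0'l : ∀ ξ, IsLinearMap K (fun x => (aRes T).r0' x ξ) := fun ξ =>
    ((LinearMap.snd K g1 m1).comp ((IsLinearMap.mk' _ (h2ml ((0:g1), ξ))).comp (LinearMap.inl K g0 m0))).isLinear
  have Ar1r : ∀ a, IsLinearMap K ((aRes T).r1 a) := fun a =>
    (-((LinearMap.snd K g1 m1).comp ((IsLinearMap.mk' _ (h2ml (a, 0))).comp (LinearMap.inr K g0 m0)))).isLinear
  have Ar1l : ∀ α, IsLinearMap K (fun a => (aRes T).r1 a α) := fun α =>
    (-((LinearMap.snd K g1 m1).comp ((IsLinearMap.mk' _ (h2mr ((0:g0), α))).comp (LinearMap.inl K g1 m1)))).isLinear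
  have Ar2c : ∀ x y, IsLinearMap K ((aRes T).r2 x y) := fun x y =>
    (-((LinearMap.snd K g1 m1).comp ((IsLinearMap.mk' _ (h3c (x, 0) (y, 0))).comp (LinearMap.inr K g0 m0)))).isLinear
  have Ar2b : ∀ x α, IsLinearMap K (fun y => (aRes T).r2 x y α) := fun x α =>
    (-((LinearMap.snd K g1 m1).comp ((IsLinearMap.mk' _ (h3b (x, 0) ((0:g0), α))).comp (LinearMap.inl K g0 m0)))).isLinear
  have Ar2a : ∀ y α, IsLinearMap K (fun x => (aRes T).r2 x y α) := fun y α =>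
    (-((LinearMap.snd K g1 m1).comp ((IsLinearMap.mk' _ (h3a (y, 0) ((0:g0), α))).comp (LinearMap.inl K g0 m0)))).isLinear
  have lpc : ∀ x α, IsLinearMap K (lphiRes T x α) := fun x α =>
    ((LinearMap.snd K g1 m1).comp ((IsLinearMap.mk' _ (h3c (x, 0) ((0:g0), α))).comp (LinearMap.inr K g0 m0))).isLinear
  have lpb : ∀ x β, IsLinearMap K (fun α => lphiRes T x α β) := fun x β =>
    ((LinearMap.snd K g1 m1).comp ((IsLinearMap.mk' _ (h3b (x, 0) ((0:g0), β))).comp (LinearMap.inr K g0 m0))).isLinear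
  have lpa : ∀ α β, IsLinearMap K (fun x => lphiRes T x α β) := fun α β =>
    ((LinearMap.snd K g1 m1).comp ((IsLinearMap.mk' _ (h3a ((0:g0), α) ((0:g0), β))).comp (LinearMap.inl K g0 m0))).isLinear
  -- neg lemmas
  have Mdneg : ∀ ξ, (mRes T).d (-ξ) = -(mRes T).d ξ := fun ξ => Md_lin.map_neg ξ
  have Ar0neg : ∀ x α, (aRes T).r0 x (-α) = -(aRes T).r0 x α := fun x α => (Ar0r x).map_neg α
  have Ar0'neg : ∀ x ξ, (aRes T).r0' x (-ξ) = -(aRes T).r0' x ξ := fun x ξ => (Ar0'r x).map_neg ξ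
  have Ml2negr : ∀ α β, (mRes T).l2 α (-β) = -(mRes T).l2 α β := fun α β => (Ml2r α).map_neg β
  have Ml2mnegr : ∀ α ξ, (mRes T).l2m α (-ξ) = -(mRes T).l2m α ξ := fun α ξ => (Ml2mr α).map_neg ξ
  have Ar1neg : ∀ a α, (aRes T).r1 a (-α) = -(aRes T).r1 a α := fun a α => (Ar1r a).map_neg α
  have Ar2anegl : ∀ x y α, (aRes T).r2 (-x) y α = -(aRes T).r2 x y α :=
    fun x y α => (Ar2a y α).map_neg x
  have lpnegc : ∀ x α β, lphiRes T x α (-β) = -lphiRes T x α β := fun x α β => (lpc x α).map_neg β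
  -- gRes equations
  have ga2 : ∀ x y, (gRes T).l2 x y = -(gRes T).l2 y x := by
    intro x y
    have h := a2 (x, (0:m0)) (y, 0)
    simp only [c2gg, Prod.neg_mk, neg_zero, Prod.mk.injEq, and_true, true_and,
      eq_self_iff_true] at h
    exact h
  have ga3ab : ∀ x y z, (gRes T).l3 x y z = -(gRes T).l3 y x z := by
    intro x y z
    have h := a3ab (x, (0:m0)) (y, 0) (z, 0)
    simp only [c3ggg, Prod.neg_mk, neg_zero, Prod.mk.injEq, and_true, true_and] at h
    exact h
  have ga3bc : ∀ x y z, (gRes T).l3 x y z = -(gRes T).l3 x z y := by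
    intro x y z
    have h := a3bc (x, (0:m0)) (y, 0) (z, 0)
    simp only [c3ggg, Prod.neg_mk, neg_zero, Prod.mk.injEq, and_true, true_and] at h
    exact h
  have gcd : ∀ x a, (gRes T).d ((gRes T).l2m x a) = (gRes T).l2 x ((gRes T).d a) := by
    intro x a
    have h := cdc (x, (0:m0)) (a, (0:m1))
    simp only [c2m_gg, cdg, c2gg, Prod.mk.injEq, and_true, true_and] at h
    exact h
  have gcdm : ∀ a b, (gRes T).l2m ((gRes T).d a) b = -(gRes T).l2m ((gRes T).d b) a := by
    intro a b
    have h := cdm2 (a, (0:m1)) (b, (0:m1))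
    simp only [cdg, c2m_gg, Prod.neg_mk, neg_zero, Prod.mk.injEq, and_true, true_and] at h
    exact h
  have gJ0 : ∀ x y z, (gRes T).d ((gRes T).l3 x y z) =
      (gRes T).l2 x ((gRes T).l2 y z) - (gRes T).l2 y ((gRes T).l2 x z)
        - (gRes T).l2 ((gRes T).l2 x y) z := by
    intro x y z
    have h := J0 (x, (0:m0)) (y, 0) (z, 0)
    simp only [c3ggg, cdg, c2gg, Prod.mk_sub_mk, sub_zero, Prod.mk.injEq, and_true,
      true_and, sub_self] at h
    exact h
  have gJ1 : ∀ x y a, (gRes T).l3 x y ((gRes T).d a) =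
      (gRes T).l2m x ((gRes T).l2m y a) - (gRes T).l2m y ((gRes T).l2m x a)
        - (gRes T).l2m ((gRes T).l2 x y) a := by
    intro x y a
    have h := J1 (x, (0:m0)) (y, 0) (a, (0:m1))
    simp only [cdg, c3ggg, c2m_gg, c2gg, Prod.mk_sub_mk, sub_zero, Prod.mk.injEq,
      and_true, true_and, sub_self] at h
    exact h
  have gJ2 : ∀ x y z w,
      (gRes T).l2m x ((gRes T).l3 y z w) - (gRes T).l2m y ((gRes T).l3 x z w)
        + (gRes T).l2m z ((gRes T).l3 x y w) - (gRes T).l2m w ((gRes T).l3 x y z)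
      = (gRes T).l3 ((gRes T).l2 x y) z w - (gRes T).l3 ((gRes T).l2 x z) y w
        + (gRes T).l3 ((gRes T).l2 x w) y z + (gRes T).l3 ((gRes T).l2 y z) x w
        - (gRes T).l3 ((gRes T).l2 y w) x z + (gRes T).l3 ((gRes T).l2 z w) x y := by
    intro x y z w
    have h := J2 (x, (0:m0)) (y, 0) (z, 0) (w, 0)
    simp only [c3ggg, c2m_gg, c2gg, Prod.mk_sub_mk, Prod.mk_add_mk, sub_zero, add_zero,
      zero_add, sub_self, Prod.mk.injEq, and_true, true_and] at h
    exact h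
  -- mRes equations
  have ma2 : ∀ α β, (mRes T).l2 α β = -(mRes T).l2 β α := by
    intro α β
    have h := a2 ((0:g0), α) ((0:g0), β)
    simp only [c2mm, Prod.neg_mk, neg_zero, Prod.mk.injEq, and_true, true_and] at h
    exact h
  have ma3ab : ∀ α β γ, (mRes T).l3 α β γ = -(mRes T).l3 β α γ := by
    intro α β γ
    have h := a3ab ((0:g0), α) ((0:g0), β) ((0:g0), γ)
    simp only [c3mmm, Prod.neg_mk, neg_zero, Prod.mk.injEq, and_true, true_and] at h
    exact h
  have ma3bc : ∀ α β γ, (mRes T).l3 α β γ = -(mRes T).l3 α γ β := by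
    intro α β γ
    have h := a3bc ((0:g0), α) ((0:g0), β) ((0:g0), γ)
    simp only [c3mmm, Prod.neg_mk, neg_zero, Prod.mk.injEq, and_true, true_and] at h
    exact h
  have mcd : ∀ α ξ, (mRes T).d ((mRes T).l2m α ξ) = (mRes T).l2 α ((mRes T).d ξ) := by
    intro α ξ
    have h := cdc ((0:g0), α) ((0:g1), ξ)
    simp only [c2m_mm, cdmm, c2mm, Prod.mk.injEq, and_true, true_and] at h
    exact h
  have mcdm : ∀ ξ η, (mRes T).l2m ((mRes T).d ξ) η = -(mRes T).l2m ((mRes T).d η) ξ := by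
    intro ξ η
    have h := cdm2 ((0:g1), ξ) ((0:g1), η)
    simp only [cdmm, c2m_mm, Prod.neg_mk, neg_zero, Prod.mk.injEq, and_true, true_and] at h
    exact h
  have mJ0 : ∀ α β γ, (mRes T).d ((mRes T).l3 α β γ) =
      (mRes T).l2 α ((mRes T).l2 β γ) - (mRes T).l2 β ((mRes T).l2 α γ)
        - (mRes T).l2 ((mRes T).l2 α β) γ := by
    intro α β γ
    have h := J0 ((0:g0), α) ((0:g0), β) ((0:g0), γ)
    simp only [c3mmm, cdmm, c2mm, Prod.mk_sub_mk, sub_zero, sub_self, Prod.mk.injEq,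
      and_true, true_and] at h
    exact h
  have mJ1 : ∀ α β ξ, (mRes T).l3 α β ((mRes T).d ξ) =
      (mRes T).l2m α ((mRes T).l2m β ξ) - (mRes T).l2m β ((mRes T).l2m α ξ)
        - (mRes T).l2m ((mRes T).l2 α β) ξ := by
    intro α β ξ
    have h := J1 ((0:g0), α) ((0:g0), β) ((0:g1), ξ)
    simp only [cdmm, c3mmm, c2m_mm, c2mm, Prod.mk_sub_mk, sub_zero, sub_self,
      Prod.mk.injEq, and_true, true_and] at h
    exact h
  have mJ2 : ∀ α β γ δ,
      (mRes T).l2m α ((mRes T).l3 β γ δ) - (mRes T).l2m β ((mRes T).l3 α γ δ)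
        + (mRes T).l2m γ ((mRes T).l3 α β δ) - (mRes T).l2m δ ((mRes T).l3 α β γ)
      = (mRes T).l3 ((mRes T).l2 α β) γ δ - (mRes T).l3 ((mRes T).l2 α γ) β δ
        + (mRes T).l3 ((mRes T).l2 α δ) β γ + (mRes T).l3 ((mRes T).l2 β γ) α δ
        - (mRes T).l3 ((mRes T).l2 β δ) α γ + (mRes T).l3 ((mRes T).l2 γ δ) α β := by
    intro α β γ δ
    have h := J2 ((0:g0), α) ((0:g0), β) ((0:g0), γ) ((0:g0), δ)
    simp only [c3mmm, c2m_mm, c2mm, Prod.mk_sub_mk, Prod.mk_add_mk, sub_zero, add_zero,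
      zero_add, sub_self, Prod.mk.injEq, and_true, true_and] at h
    exact h
  -- antisymmetries for action
  have r2anti : ∀ x y α, (aRes T).r2 x y α = -(aRes T).r2 y x α := by
    intro x y α
    have h := a3ab (x, (0:m0)) (y, 0) ((0:g0), α)
    simp only [c3ggm, Prod.neg_mk, neg_zero, neg_neg, Prod.mk.injEq, and_true, true_and] at h
    rw [← h, neg_neg]
  have lpanti : ∀ x α β, lphiRes T x α β = -lphiRes T x β α := by
    intro x α β
    have h := a3bc (x, (0:m0)) ((0:g0), α) ((0:g0), β)
    simp only [c3gmm, Prod.neg_mk, neg_zero, Prod.mk.injEq, and_true, true_and] at h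
    exact h
  -- action equations
  have act1 : ∀ x ξ, (mRes T).d ((aRes T).r0' x ξ) = (aRes T).r0 x ((mRes T).d ξ) := by
    intro x ξ
    have h := cdc (x, (0:m0)) ((0:g1), ξ)
    simp only [c2m_gm, cdmm, c2gm, Prod.mk.injEq, and_true, true_and] at h
    exact h
  have act2 : ∀ a α, (aRes T).r0 ((gRes T).d a) α = (mRes T).d ((aRes T).r1 a α) := by
    intro a α
    have h := cdc ((0:g0), α) (a, (0:m1))
    simp only [c2m_mg, cdmm, cdg, c2mg, Mdneg, Prod.neg_mk, neg_zero, Prod.mk.injEq,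
      and_true, true_and] at h
    exact cancel_aux h (by abel)
  have act3 : ∀ a ξ, (aRes T).r0' ((gRes T).d a) ξ = (aRes T).r1 a ((mRes T).d ξ) := by
    intro a ξ
    have h := cdm2 (a, (0:m1)) ((0:g1), ξ)
    simp only [cdg, cdmm, c2m_gm, c2m_mg, Prod.neg_mk, neg_zero, neg_neg,
      Prod.mk.injEq, and_true, true_and] at h
    exact h
  have act4 : ∀ x y α, (aRes T).r0 ((gRes T).l2 x y) α - (aRes T).r0 x ((aRes T).r0 y α)
      + (aRes T).r0 y ((aRes T).r0 x α) = (mRes T).d ((aRes T).r2 x y α) := by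
    intro x y α
    have h := J0 (x, (0:m0)) (y, 0) ((0:g0), α)
    simp only [c3ggm, cdmm, Mdneg, c2gm, c2gg, Prod.neg_mk, neg_zero, Prod.mk_sub_mk,
      sub_zero, sub_self, Prod.mk.injEq, and_true, true_and] at h
    exact cancel_aux h (by abel)
  have act5 : ∀ x y ξ, (aRes T).r0' ((gRes T).l2 x y) ξ - (aRes T).r0' x ((aRes T).r0' y ξ)
      + (aRes T).r0' y ((aRes T).r0' x ξ) = (aRes T).r2 x y ((mRes T).d ξ) := by
    intro x y ξ
    have h := J1 (x, (0:m0)) (y, 0) ((0:g1), ξ)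
    simp only [cdmm, c3ggm, c2m_gm, c2gg, Prod.neg_mk, neg_zero, Prod.mk_sub_mk,
      sub_zero, sub_self, Prod.mk.injEq, and_true, true_and] at h
    exact cancel_aux h (by abel)
  have act6 : ∀ x a α, (aRes T).r1 ((gRes T).l2m x a) α - (aRes T).r0' x ((aRes T).r1 a α)
      + (aRes T).r1 a ((aRes T).r0 x α) = (aRes T).r2 x ((gRes T).d a) α := by
    intro x a α
    have h := J1 (x, (0:m0)) ((0:g0), α) (a, (0:m1))
    simp only [cdg, c3gmg, c2m_mg, c2m_gg, c2m_gm, c2gm, c2m_mm, Ar0'neg, Prod.neg_mk, neg_zero,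
      neg_neg, Prod.mk_sub_mk, sub_zero, sub_self, Prod.mk.injEq, and_true, true_and] at h
    exact cancel_aux h.symm (by abel)
  have act7 : ∀ x y z α,
      (aRes T).r0' x ((aRes T).r2 y z α) - (aRes T).r2 y z ((aRes T).r0 x α)
        + (aRes T).r0' y ((aRes T).r2 z x α) - (aRes T).r2 z x ((aRes T).r0 y α)
        + (aRes T).r0' z ((aRes T).r2 x y α) - (aRes T).r2 x y ((aRes T).r0 z α)
      = (aRes T).r2 ((gRes T).l2 x y) z α + (aRes T).r2 ((gRes T).l2 y z) x α
        + (aRes T).r2 ((gRes T).l2 z x) y α + (aRes T).r1 ((gRes T).l3 x y z) α := by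
    intro x y z α
    have h := J2 (x, (0:m0)) (y, 0) (z, 0) ((0:g0), α)
    simp only [c3ggm, c3ggg, c3mgg, c2m_gm, c2m_mg, c2gg, c2gm, Ar0'neg, Prod.neg_mk,
      neg_zero, neg_neg, Prod.mk_sub_mk, Prod.mk_add_mk, sub_zero, add_zero, zero_add,
      sub_self, Prod.mk.injEq, and_true, true_and] at h
    rw [r2anti z x α, Ar0'neg, r2anti z x ((aRes T).r0 y α), ga2 z x, Ar2anegl]
    exact cancel_aux h.symm (by abel)
  -- derivation equations
  have der2 : ∀ x α β, (mRes T).d (lphiRes T x α β) =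
      (aRes T).r0 x ((mRes T).l2 α β) - (mRes T).l2 ((aRes T).r0 x α) β
        - (mRes T).l2 α ((aRes T).r0 x β) := by
    intro x α β
    have h := J0 (x, (0:m0)) ((0:g0), α) ((0:g0), β)
    simp only [c3gmm, cdmm, c2gm, c2mg, c2mm, Prod.neg_mk, neg_zero, Prod.mk_sub_mk,
      sub_zero, sub_self, Prod.mk.injEq, and_true, true_and] at h
    exact cancel_aux h (by abel)
  have der3 : ∀ x α ξ, lphiRes T x α ((mRes T).d ξ) =
      (aRes T).r0' x ((mRes T).l2m α ξ) - (mRes T).l2m ((aRes T).r0 x α) ξ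
        - (mRes T).l2m α ((aRes T).r0' x ξ) := by
    intro x α ξ
    have h := J1 (x, (0:m0)) ((0:g0), α) ((0:g1), ξ)
    simp only [cdmm, c3gmm, c2m_mm, c2m_gm, c2gm, Prod.mk_sub_mk, sub_zero, sub_self,
      Prod.mk.injEq, and_true, true_and] at h
    exact cancel_aux h (by abel)
  have der4 : ∀ x α β γ, (aRes T).r0' x ((mRes T).l3 α β γ) =
      lphiRes T x α ((mRes T).l2 β γ) + (mRes T).l2m α (lphiRes T x β γ)
        + (mRes T).l3 ((aRes T).r0 x α) β γ
        + lphiRes T x β ((mRes T).l2 γ α) + (mRes T).l2m β (lphiRes T x γ α)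
        + (mRes T).l3 α ((aRes T).r0 x β) γ
        + lphiRes T x γ ((mRes T).l2 α β) + (mRes T).l2m γ (lphiRes T x α β)
        + (mRes T).l3 α β ((aRes T).r0 x γ) := by
    intro x α β γ
    have h := J2 (x, (0:m0)) ((0:g0), α) ((0:g0), β) ((0:g0), γ)
    simp only [c3mmm, c3gmm, c3mgm, c2m_gm, c2m_mm, c2gm, c2mm, Prod.neg_mk, neg_zero,
      neg_neg, Prod.mk_sub_mk, Prod.mk_add_mk, sub_zero, add_zero, zero_add, sub_self,
      Prod.mk.injEq, and_true, true_and] at h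
    rw [lpanti x α ((mRes T).l2 β γ), ma2 γ α, lpnegc, lpanti x β ((mRes T).l2 α γ),
      lpanti x γ ((mRes T).l2 α β), lpanti x γ α, Ml2mnegr,
      ma3ab α ((aRes T).r0 x β) γ, ma3bc α β ((aRes T).r0 x γ),
      ma3ab α ((aRes T).r0 x γ) β]
    exact cancel_aux h (by abel)
  have lpd : ∀ a α β, lphiRes T ((gRes T).d a) α β =
      (aRes T).r1 a ((mRes T).l2 α β) - (mRes T).l2m α ((aRes T).r1 a β)
        + (mRes T).l2m β ((aRes T).r1 a α) := by
    intro a α β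
    have h := J1 ((0:g0), α) ((0:g0), β) (a, (0:m1))
    simp only [cdg, c3mmg, c2m_mg, c2m_mm, c2mm, Ml2mnegr, Prod.neg_mk, neg_zero,
      neg_neg, Prod.mk_sub_mk, sub_zero, sub_self, Prod.mk.injEq, and_true, true_and] at h
    exact cancel_aux h (by abel)
  have lpl2 : ∀ x y α β, lphiRes T ((gRes T).l2 x y) α β
      - ((aRes T).r0' x (lphiRes T y α β) - lphiRes T y ((aRes T).r0 x α) β
          - lphiRes T y α ((aRes T).r0 x β))
      + ((aRes T).r0' y (lphiRes T x α β) - lphiRes T x ((aRes T).r0 y α) β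
          - lphiRes T x α ((aRes T).r0 y β))
      = (aRes T).r2 x y ((mRes T).l2 α β) - (mRes T).l2m α ((aRes T).r2 x y β)
        + (mRes T).l2m β ((aRes T).r2 x y α) := by
    intro x y α β
    have h := J2 (x, (0:m0)) (y, 0) ((0:g0), α) ((0:g0), β)
    simp only [c3gmm, c3ggm, c3mgm, c3mgg, c2m_gm, c2m_mm, c2gg, c2gm, c2mm, Ml2mnegr,
      Prod.neg_mk, neg_zero, neg_neg, Prod.mk_sub_mk, Prod.mk_add_mk, sub_zero,
      add_zero, zero_add, sub_self, Prod.mk.injEq, and_true, true_and] at h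
    rw [lpanti y α ((aRes T).r0 x β), lpanti x α ((aRes T).r0 y β)]
    exact cancel_aux h.symm (by abel)
  -- the crossed-product equality
  have dadd : ∀ a b, T.d (a + b) = T.d a + T.d b := fun a b => hd.map_add a b
  have l2addl : ∀ p p' q, T.l2 (p + p') q = T.l2 p q + T.l2 p' q :=
    fun p p' q => (h2l q).map_add p p'
  have l2addr : ∀ p q q', T.l2 p (q + q') = T.l2 p q + T.l2 p q' :=
    fun p q q' => (h2r p).map_add q q'
  have l2maddl : ∀ p p' b, T.l2m (p + p') b = T.l2m p b + T.l2m p' b :=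
    fun p p' b => (h2ml b).map_add p p'
  have l2maddr : ∀ p b b', T.l2m p (b + b') = T.l2m p b + T.l2m p b' :=
    fun p b b' => (h2mr p).map_add b b'
  have l3add1 : ∀ p p' q r, T.l3 (p + p') q r = T.l3 p q r + T.l3 p' q r :=
    fun p p' q r => (h3a q r).map_add p p'
  have l3add2 : ∀ p q q' r, T.l3 p (q + q') r = T.l3 p q r + T.l3 p q' r :=
    fun p q q' r => (h3b p r).map_add q q'
  have l3add3 : ∀ p q r r', T.l3 p q (r + r') = T.l3 p q r + T.l3 p q r' :=
    fun p q r r' => (h3c p q).map_add r r'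
  have split0 : ∀ p : g0 × m0, p = ((p.1, 0) : g0 × m0) + (0, p.2) := fun p => by
    ext <;> simp
  have split1 : ∀ p : g1 × m1, p = ((p.1, 0) : g1 × m1) + (0, p.2) := fun p => by
    ext <;> simp
  have efinal : T = crossedProduct (gRes T) (mRes T) (aRes T) (lphiRes T) := by
    apply lieTwoStr_ext
    · funext q
      conv_lhs => rw [split1 q]
      rw [dadd, cdg, cdmm]
      simp [crossedProduct, Prod.mk_add_mk]
    · funext p q
      conv_lhs => rw [split0 p, split0 q]
      rw [l2addl, l2addr, l2addr, c2gg, c2gm, c2mg, c2mm]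
      simp only [crossedProduct, Prod.mk_add_mk, add_zero, zero_add]
      refine Prod.ext (by simp) ?_
      simp only []
      abel
    · funext p q
      conv_lhs => rw [split0 p, split1 q]
      rw [l2maddl, l2maddr, l2maddr, c2m_gg, c2m_gm, c2m_mg, c2m_mm]
      simp only [crossedProduct, Prod.mk_add_mk, add_zero, zero_add]
      refine Prod.ext (by simp) ?_
      simp only []
      abel
    · funext p q r
      conv_lhs => rw [split0 p, split0 q, split0 r]
      rw [l3add1, l3add2, l3add2, l3add3, l3add3, l3add3, l3add3]
      simp only [c3ggg, c3ggm, c3gmg, c3mgg, c3gmm, c3mgm, c3mmg, c3mmm, crossedProduct]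
      rw [show (aRes T).r2 r.1 p.1 q.2 = -(aRes T).r2 p.1 r.1 q.2 from r2anti _ _ _,
        show lphiRes T q.1 r.2 p.2 = -lphiRes T q.1 p.2 r.2 from lpanti _ _ _]
      refine Prod.ext ?_ ?_ <;> simp <;> abel
  exact ⟨⟨Gd_lin, Gl2r, Gl2l, Gl2mr, Gl2ml, Gl3c, Gl3b, Gl3a, ga2, ga3ab, ga3bc, gcd,
      gcdm, gJ0, gJ1, gJ2⟩,
    ⟨Md_lin, Ml2r, Ml2l, Ml2mr, Ml2ml, Ml3c, Ml3b, Ml3a, ma2, ma3ab, ma3bc, mcd, mcdm,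
      mJ0, mJ1, mJ2⟩,
    ⟨⟨Ar0r, Ar0l, Ar0'r, Ar0'l, Ar1r, Ar1l, Ar2c, Ar2b, Ar2a, r2anti, act1, act2, act3,
        act4, act5, act6, act7⟩,
      fun x => ⟨act1 x, der2 x, der3 x, der4 x⟩,
      lpc, lpb, lpa, lpanti, lpd, lpl2⟩,
    efinal⟩
end

section
/- Let (m, g, φ, ϕ, σ) be a crossed module of Lie 2-algebras with m: m₁ →d̃ m₀ and g: g₁ →d g₀, structure map ϕ = (ϕ₀, ϕ₁): m → g and σ: g₀ ∧ m₀ → g₁. Then the mapping cone complex 𝔙: m₁ →d_D g₁ ⊕ m₀ →d_D g₀, with d_D(ξ) = −ϕ₁ξ + d̃ξ and d_D(a+α) = da + ϕ₀α, equipped with the brackets ⟦x,y⟧ = l₂(x,y), ⟦x,ξ⟧ = x▷ξ, ⟦a+α, b+β⟧ = a▷β + b▷α, ⟦x, a+α⟧ = l₂(x,a) − σ(x,α) + x▷α, and the ternary bracket l³(x,y,z) = l₃(x,y,z), l³(x,y,a+α) = −(x,y)▷α, is a strict Lie 3-algebra (i.e., a 3-term L∞-algebra with l₄ = 0). -/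
/-! Every `L∞` identity of the cone, taken componentwise in `g₀`, `g₁ ⊕ m₀` and `m₁`, is a
linear combination of the axioms of the Lie 2-algebra `g`, of its action on `m`, of the
homomorphism `Π = Id + σ + ϕ`, and of conditions (i)–(iv), which rewrite the brackets of `m`
through the action `▷` and through `σ`. Elements coming from `g₁` have zero `m₀`-component,
so `l³` kills them: this gives the identity for `n = 5` and reduces those for `n = 4` to the
coherence laws of `g` and of the action. -/

universe u

variable (K : Type u) [Field K]
variable {g0 g1 h0 h1 m0 m1 : Type u}
  [AddCommGroup g0] [Module K g0] [AddCommGroup g1] [Module K g1]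
  [AddCommGroup h0] [Module K h0] [AddCommGroup h1] [Module K h1]
  [AddCommGroup m0] [Module K m0] [AddCommGroup m1] [Module K m1]

variable {K}

variable (K)

/-! The mapping cone complex `𝔙 : m₁ → g₁ ⊕ m₀ → g₀` of a crossed module, with its
binary bracket `⟦·,·⟧` and ternary bracket `l³`. -/

def coneD2 (M : LieTwoStr m0 m1) (p1 : m1 → g1) : m1 → g1 × m0 :=
  fun ξ => (-p1 ξ, M.d ξ)

def coneD1 (L : LieTwoStr g0 g1) (p0 : m0 → g0) : g1 × m0 → g0 :=
  fun u => L.d u.1 + p0 u.2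

/-- `⟦x, a+α⟧ = l₂(x,a) − σ(x,α) + x▷α`. -/
def coneB01 (L : LieTwoStr g0 g1) (A : TwoAction g0 g1 m0 m1) (σ : g0 → m0 → g1) :
    g0 → g1 × m0 → g1 × m0 :=
  fun x u => (L.l2m x u.1 - σ x u.2, A.r0 x u.2)

/-- `⟦a+α, b+β⟧ = a▷β + b▷α`. -/
def coneB11 (A : TwoAction g0 g1 m0 m1) : g1 × m0 → g1 × m0 → m1 :=
  fun u v => A.r1 u.1 v.2 + A.r1 v.1 u.2

/-- `l³(x,y,a+α) = −(x,y)▷α`. -/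
def coneT1 (A : TwoAction g0 g1 m0 m1) : g0 → g0 → g1 × m0 → m1 :=
  fun x y u => - A.r2 x y u.2

/-- Inclusion `g1 → g1 ⊕ m0`. -/
def coneE : g1 → g1 × m0 := fun a => (a, (0 : m0))

section

variable {K} {L : LieTwoStr g0 g1} {dm : m1 → m0} {A : TwoAction g0 g1 m0 m1}

theorem IsLieTwoAlgebra.jacobi (hL : IsLieTwoAlgebra K L) (x y z : g0) :
    L.l2 (L.l2 x y) z + L.l2 (L.l2 y z) x + L.l2 (L.l2 z x) y = - L.d (L.l3 x y z) := by
  obtain ⟨-, hl2, -, -, -, -, -, -, hl2_antisymm, -, -, -, -, hd_l3, -⟩ := hL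
  have h : L.l2 (L.l2 z x) y = L.l2 y (L.l2 x z) := by
    rw [hl2_antisymm (L.l2 z x) y, hl2_antisymm z x, (hl2 y).map_neg, neg_neg]
  linear_combination (norm := abel) hd_l3 x y z + hl2_antisymm (L.l2 y z) x + h

theorem IsAction.isLinearMap_coneB11 (hA : IsAction K L dm A) (u : g1 × m0) :
    IsLinearMap K (coneB11 A u) := by
  obtain ⟨-, -, -, -, hr1, hr1', -⟩ := hA
  exact ((hr1 u.1).mk' _ ∘ₗ LinearMap.snd K g1 m0
    + (hr1' u.2).mk' _ ∘ₗ LinearMap.fst K g1 m0).isLinear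

theorem IsAction.coneB11_coneE_left (hA : IsAction K L dm A) (a : g1) (u : g1 × m0) :
    coneB11 A (coneE a) u = A.r1 a u.2 := by
  obtain ⟨-, -, -, -, hr1, -⟩ := hA
  simp [coneB11, coneE, (hr1 u.1).map_zero]

theorem IsAction.isLinearMap_coneB11_left (hA : IsAction K L dm A) (v : g1 × m0) :
    IsLinearMap K (fun u => coneB11 A u v) := by
  rw [show (fun u => coneB11 A u v) = coneB11 A v from funext fun _ => add_comm _ _]
  exact hA.isLinearMap_coneB11 v

theorem IsAction.isLinearMap_coneT1 (hA : IsAction K L dm A) (x y : g0) :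
    IsLinearMap K (coneT1 A x y) := by
  obtain ⟨-, -, -, -, -, -, hr2, -⟩ := hA
  exact (-((hr2 x y).mk' _ ∘ₗ LinearMap.snd K g1 m0)).isLinear

theorem IsAction.isLinearMap_coneT1_middle (hA : IsAction K L dm A) (x : g0) (u : g1 × m0) :
    IsLinearMap K (fun y => coneT1 A x y u) := by
  obtain ⟨-, -, -, -, -, -, -, hr2, -⟩ := hA
  exact (-(hr2 x u.2).mk' _).isLinear

theorem IsAction.coneT1_antisymm (hA : IsAction K L dm A) (x y : g0) (u : g1 × m0) :
    coneT1 A x y u = - coneT1 A y x u := by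
  obtain ⟨-, -, -, -, -, -, -, -, -, hr2_antisymm, -⟩ := hA
  simp only [coneT1, hr2_antisymm x y u.2]

theorem IsAction.coneT1_coneE (hA : IsAction K L dm A) (x y : g0) (a : g1) :
    coneT1 A x y (coneE a) = 0 := by
  obtain ⟨-, -, -, -, -, -, hr2, -⟩ := hA
  simp [coneT1, coneE, (hr2 x y).map_zero]

theorem IsAction.r0'_jacobi {M : LieTwoStr m0 m1} (hA : IsAction K L M.d A) (p1 : m1 → g1)
    (x y : g0) (ξ : m1) :
    A.r0' (L.l2 x y) ξ - A.r0' x (A.r0' y ξ) + A.r0' y (A.r0' x ξ)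
      = - coneT1 A x y (coneD2 M p1 ξ) := by
  obtain ⟨-, -, -, -, -, -, -, -, -, -, -, -, -, -, hr0'_jacobi, -⟩ := hA
  simpa only [coneT1, coneD2, neg_neg] using hr0'_jacobi x y ξ

theorem IsAction.coneT1_coherence {σ : g0 → m0 → g1} (hA : IsAction K L dm A)
    (hL : IsLieTwoAlgebra K L) (x y z : g0) (u : g1 × m0) :
    A.r0' x (coneT1 A y z u) - A.r0' y (coneT1 A x z u) + A.r0' z (coneT1 A x y u)
        + coneB11 A (coneE (L.l3 x y z)) u
      = coneT1 A (L.l2 x y) z u - coneT1 A (L.l2 x z) y u + coneT1 A (L.l2 y z) x u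
        + coneT1 A y z (coneB01 L A σ x u) - coneT1 A x z (coneB01 L A σ y u)
        + coneT1 A x y (coneB01 L A σ z u) := by
  rw [hA.coneB11_coneE_left]
  obtain ⟨-, -, -, -, -, -, -, -, hl2_antisymm, -⟩ := hL
  obtain ⟨-, -, hr0', -, -, -, -, -, hr2_left, hr2_antisymm, -, -, -, -, -, -, hcoh⟩ := hA
  have hr0'_r2_swap : A.r0' y (A.r2 z x u.2) = - A.r0' y (A.r2 x z u.2) := by
    rw [hr2_antisymm z x u.2]; exact (hr0' y).map_neg _
  have hr2_l2_swap : A.r2 (L.l2 z x) y u.2 = - A.r2 (L.l2 x z) y u.2 := by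
    rw [hl2_antisymm z x]; exact (hr2_left y u.2).map_neg _
  simp only [coneT1, coneB01]
  linear_combination (norm := abel) - hcoh x y z u.2
    + (hr0' x).map_neg (A.r2 y z u.2) - (hr0' y).map_neg (A.r2 x z u.2) + hr0'_r2_swap
    + (hr0' z).map_neg (A.r2 x y u.2) - hr2_l2_swap - hr2_antisymm z x (A.r0 y u.2)

variable {M : LieTwoStr m0 m1} {lφ : g0 → m0 → m0 → m1}
  {p0 : m0 → g0} {p1 : m1 → g1} {p2 : m0 → m0 → g1} {σ : g0 → m0 → g1}

namespace IsCrossedModule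

theorem isLieTwoAlgebra_g (h : IsCrossedModule K L M A lφ p0 p1 p2 σ) : IsLieTwoAlgebra K L :=
  h.1

theorem isAction (h : IsCrossedModule K L M A lφ p0 p1 p2 σ) : IsAction K L M.d A :=
  h.2.2.1.1

theorem isLinearMap_coneB01 (h : IsCrossedModule K L M A lφ p0 p1 p2 σ) (x : g0) :
    IsLinearMap K (coneB01 L A σ x) := by
  obtain ⟨⟨-, -, -, hl2m, -⟩, -, ⟨⟨hr0, -⟩, -⟩, -, hσ, -⟩ := h
  exact (((hl2m x).mk' _ ∘ₗ LinearMap.fst K g1 m0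
    - (hσ x).mk' _ ∘ₗ LinearMap.snd K g1 m0).prod
    ((hr0 x).mk' _ ∘ₗ LinearMap.snd K g1 m0)).isLinear

theorem isLinearMap_coneB01_left (h : IsCrossedModule K L M A lφ p0 p1 p2 σ) (u : g1 × m0) :
    IsLinearMap K (fun x => coneB01 L A σ x u) := by
  obtain ⟨⟨-, -, -, -, hl2m, -⟩, -, ⟨⟨-, hr0, -⟩, -⟩, -, -, hσ, -⟩ := h
  exact (((hl2m u.1).mk' _ - (hσ u.2).mk' _).prod ((hr0 u.2).mk' _)).isLinear

theorem coneD1_coneD2 (h : IsCrossedModule K L M A lφ p0 p1 p2 σ) (ξ : m1) :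
    coneD1 L p0 (coneD2 M p1 ξ) = 0 := by
  obtain ⟨⟨hd, -⟩, -, -, ⟨-, -, -, -, -, hd_p1, -⟩, -⟩ := h
  simp only [coneD1, coneD2, hd.map_neg, hd_p1, neg_add_cancel]

theorem coneB01_coneE (h : IsCrossedModule K L M A lφ p0 p1 p2 σ) (x : g0) (a : g1) :
    coneB01 L A σ x (coneE a) = coneE (L.l2m x a) := by
  obtain ⟨-, -, ⟨⟨hr0, -⟩, -⟩, -, hσ, -⟩ := h
  simp [coneB01, coneE, (hr0 x).map_zero, (hσ x).map_zero]

theorem coneB01_coherence (h : IsCrossedModule K L M A lφ p0 p1 p2 σ) (x y z w : g0) :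
    coneB01 L A σ x (coneE (L.l3 y z w)) - coneB01 L A σ y (coneE (L.l3 x z w))
        + coneB01 L A σ z (coneE (L.l3 x y w)) - coneB01 L A σ w (coneE (L.l3 x y z))
      = coneE (L.l3 (L.l2 x y) z w) - coneE (L.l3 (L.l2 x z) y w)
        + coneE (L.l3 (L.l2 x w) y z) + coneE (L.l3 (L.l2 y z) x w)
        - coneE (L.l3 (L.l2 y w) x z) + coneE (L.l3 (L.l2 z w) x y) := by
  simp only [h.coneB01_coneE]
  obtain ⟨⟨-, -, -, -, -, -, -, -, -, -, -, -, -, -, -, hcoh⟩, -⟩ := h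
  ext
  · simpa [coneE] using hcoh x y z w
  · simp [coneE]

theorem coneD1_coneB01 (h : IsCrossedModule K L M A lφ p0 p1 p2 σ) (x : g0) (u : g1 × m0) :
    coneD1 L p0 (coneB01 L A σ x u) = L.l2 x (coneD1 L p0 u) := by
  obtain ⟨⟨hd, hl2, -, -, -, -, -, -, -, -, -, hd_l2m, -⟩, -, -, -, -, -, hp0_r0, -⟩ := h
  simp only [coneD1, coneB01]
  linear_combination (norm := abel) hd.map_sub (L.l2m x u.1) (σ x u.2)
    + hd_l2m x u.1 + hp0_r0 x u.2 - (hl2 x).map_add (L.d u.1) (p0 u.2)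

theorem coneD2_r0' (h : IsCrossedModule K L M A lφ p0 p1 p2 σ) (x : g0) (ξ : m1) :
    coneD2 M p1 (A.r0' x ξ) = coneB01 L A σ x (coneD2 M p1 ξ) := by
  obtain ⟨⟨-, -, -, hl2m, -⟩, -, ⟨⟨-, -, -, -, -, -, -, -, -, -, hd_r0', -⟩, -⟩,
    -, -, -, -, -, hp1_r0', -⟩ := h
  refine Prod.ext ?_ (hd_r0' x ξ)
  simp only [coneD2, coneB01]
  linear_combination (norm := abel) - hp1_r0' x ξ - (hl2m x).map_neg (p1 ξ)

theorem r0'_coneD1 (h : IsCrossedModule K L M A lφ p0 p1 p2 σ) (u : g1 × m0) (ξ : m1) :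
    A.r0' (coneD1 L p0 u) ξ = coneB11 A u (coneD2 M p1 ξ) := by
  obtain ⟨-, -, ⟨⟨-, -, -, hr0', -, hr1, -, -, -, -, -, -, hr0'_d, -⟩, -⟩,
    -, -, -, -, -, -, -, -, hl2m_eq, hr1_p1, -⟩ := h
  simp only [coneD1, coneD2, coneB11]
  linear_combination (norm := abel) (hr0' ξ).map_add (L.d u.1) (p0 u.2)
    + hr0'_d u.1 ξ - hl2m_eq u.2 ξ + hr1_p1 ξ u.2 - (hr1 u.2).map_neg (p1 ξ)

theorem coneD2_coneB11 (h : IsCrossedModule K L M A lφ p0 p1 p2 σ) (u v : g1 × m0) :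
    coneD2 M p1 (coneB11 A u v)
      = coneB01 L A σ (coneD1 L p0 u) v + coneB01 L A σ (coneD1 L p0 v) u := by
  obtain ⟨⟨-, -, -, -, hl2m, -, -, -, -, -, -, -, hl2m_d, -⟩,
    ⟨hMd, -, -, -, -, -, -, -, hM_l2_antisymm, -⟩,
    ⟨⟨-, hr0, -, -, -, -, -, -, -, -, -, hr0_d, -⟩, -⟩, ⟨-, hp1, -⟩,
    -, hσ, -, hp1_r1, -, -, hl2_eq, -, -, -, -, hp2_eq, hp2_eq'⟩ := h
  simp only [coneD2, coneB11, coneB01, coneD1, Prod.mk_add_mk, Prod.mk.injEq]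
  constructor
  · linear_combination (norm := abel)
      - hp1.map_add (A.r1 u.1 v.2) (A.r1 v.1 u.2) - hp1_r1 u.1 v.2 - hp1_r1 v.1 u.2
      - (hl2m v.1).map_add (L.d u.1) (p0 u.2) - (hl2m u.1).map_add (L.d v.1) (p0 v.2)
      + (hσ v.2).map_add (L.d u.1) (p0 u.2) + (hσ u.2).map_add (L.d v.1) (p0 v.2)
      - hl2m_d u.1 v.1 - hp2_eq u.2 v.2 + hp2_eq' u.2 v.2
  · linear_combination (norm := abel)
      hMd.map_add (A.r1 u.1 v.2) (A.r1 v.1 u.2) - hr0_d u.1 v.2 - hr0_d v.1 u.2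
      - (hr0 v.2).map_add (L.d u.1) (p0 u.2) - (hr0 u.2).map_add (L.d v.1) (p0 v.2)
      + hl2_eq u.2 v.2 + hl2_eq v.2 u.2 - hM_l2_antisymm u.2 v.2

theorem coneB01_jacobi (h : IsCrossedModule K L M A lφ p0 p1 p2 σ) (x y : g0) (u : g1 × m0) :
    coneB01 L A σ (L.l2 x y) u - coneB01 L A σ x (coneB01 L A σ y u)
        + coneB01 L A σ y (coneB01 L A σ x u)
      = - coneE (L.l3 x y (coneD1 L p0 u)) - coneD2 M p1 (coneT1 A x y u) := by
  obtain ⟨⟨-, -, -, hl2m, -, hl3, -, -, -, -, -, -, -, -, hl3_d, -⟩, ⟨hMd, -⟩,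
    ⟨⟨-, -, -, -, -, -, -, -, -, -, -, -, -, hr0_jacobi, -⟩, -⟩, ⟨-, hp1, -⟩,
    -, -, -, -, -, hσ_jacobi, -⟩ := h
  simp only [coneB01, coneE, coneD1, coneD2, coneT1, Prod.mk_sub_mk, Prod.mk_add_mk,
    Prod.neg_mk, Prod.mk.injEq]
  constructor
  · linear_combination (norm := abel)
      - (hl2m x).map_sub (L.l2m y u.1) (σ y u.2) + (hl2m y).map_sub (L.l2m x u.1) (σ x u.2)
      + hl3_d x y u.1 - hσ_jacobi x y u.2 + (hl3 x y).map_add (L.d u.1) (p0 u.2)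
      - hp1.map_neg (A.r2 x y u.2)
  · linear_combination (norm := abel) hr0_jacobi x y u.2 + hMd.map_neg (A.r2 x y u.2)

theorem coneB01_jacobi_coneB11 (h : IsCrossedModule K L M A lφ p0 p1 p2 σ) (x : g0)
    (u v : g1 × m0) :
    coneB11 A (coneB01 L A σ x u) v - A.r0' x (coneB11 A u v)
        + coneB11 A (coneB01 L A σ x v) u
      = - coneT1 A x (coneD1 L p0 u) v - coneT1 A x (coneD1 L p0 v) u := by
  obtain ⟨-, -, ⟨⟨-, -, hr0', -, -, hr1, -, hr2, -, -, -, -, -, -, -, hr1_jacobi, -⟩,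
    -, -, -, -, hlφ_antisymm, -⟩, -, -, -, -, -, -, -, -, -, -, -, hlφ_eq, -⟩ := h
  simp only [coneB11, coneB01, coneD1, coneT1]
  linear_combination (norm := abel)
    (hr1 v.2).map_sub (L.l2m x u.1) (σ x u.2) + (hr1 u.2).map_sub (L.l2m x v.1) (σ x v.2)
    - (hr0' x).map_add (A.r1 u.1 v.2) (A.r1 v.1 u.2)
    + hr1_jacobi x u.1 v.2 + hr1_jacobi x v.1 u.2
    - (hr2 x v.2).map_add (L.d u.1) (p0 u.2) - (hr2 x u.2).map_add (L.d v.1) (p0 v.2)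
    - hlφ_eq x u.2 v.2 - hlφ_eq x v.2 u.2 + hlφ_antisymm x u.2 v.2

end IsCrossedModule

end

/-- The mapping cone complex of a crossed module of Lie 2-algebras, with
the brackets `⟦·,·⟧` and `l³`, is a strict Lie 3-algebra (3-term `L∞`-algebra with
`l₄ = 0`): the `L∞` identities hold for `n = 1, …, 5`. -/
theorem mapping_cone_strict_lie3 (L : LieTwoStr g0 g1) (M : LieTwoStr m0 m1)
    (A : TwoAction g0 g1 m0 m1) (lφ : g0 → m0 → m0 → m1)
    (p0 : m0 → g0) (p1 : m1 → g1) (p2 : m0 → m0 → g1) (σ : g0 → m0 → g1)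
    (hCM : IsCrossedModule K L M A lφ p0 p1 p2 σ) :
    -- multilinearity and graded skew-symmetry
    (∀ x : g0, IsLinearMap K (coneB01 L A σ x)) ∧
    (∀ u : g1 × m0, IsLinearMap K (fun x => coneB01 L A σ x u)) ∧
    (∀ u : g1 × m0, IsLinearMap K (coneB11 A u)) ∧
    (∀ v : g1 × m0, IsLinearMap K (fun u => coneB11 A u v)) ∧
    (∀ x y : g0, IsLinearMap K (coneT1 A x y)) ∧
    (∀ (x : g0) (u : g1 × m0), IsLinearMap K (fun y => coneT1 A x y u)) ∧
    (∀ u v : g1 × m0, coneB11 A u v = coneB11 A v u) ∧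
    (∀ (x y : g0) (u : g1 × m0), coneT1 A x y u = - coneT1 A y x u) ∧
    -- n = 1 : d_D² = 0
    (∀ ξ : m1, coneD1 L p0 (coneD2 M p1 ξ) = 0) ∧
    -- n = 2 : Leibniz rules
    (∀ (x : g0) (u : g1 × m0),
      coneD1 L p0 (coneB01 L A σ x u) = L.l2 x (coneD1 L p0 u)) ∧
    (∀ (x : g0) (ξ : m1),
      coneD2 M p1 (A.r0' x ξ) = coneB01 L A σ x (coneD2 M p1 ξ)) ∧
    (∀ (u : g1 × m0) (ξ : m1),
      A.r0' (coneD1 L p0 u) ξ = coneB11 A u (coneD2 M p1 ξ)) ∧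
    (∀ u v : g1 × m0,
      coneD2 M p1 (coneB11 A u v)
        = coneB01 L A σ (coneD1 L p0 u) v + coneB01 L A σ (coneD1 L p0 v) u) ∧
    -- n = 3 : graded Jacobi identities
    (∀ x y z : g0,
      L.l2 (L.l2 x y) z + L.l2 (L.l2 y z) x + L.l2 (L.l2 z x) y
        = - L.d (L.l3 x y z)) ∧
    (∀ (x y : g0) (ξ : m1),
      A.r0' (L.l2 x y) ξ - A.r0' x (A.r0' y ξ) + A.r0' y (A.r0' x ξ)
        = - coneT1 A x y (coneD2 M p1 ξ)) ∧
    (∀ (x y : g0) (u : g1 × m0),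
      coneB01 L A σ (L.l2 x y) u - coneB01 L A σ x (coneB01 L A σ y u)
          + coneB01 L A σ y (coneB01 L A σ x u)
        = - coneE (L.l3 x y (coneD1 L p0 u)) - coneD2 M p1 (coneT1 A x y u)) ∧
    (∀ (x : g0) (u v : g1 × m0),
      coneB11 A (coneB01 L A σ x u) v - A.r0' x (coneB11 A u v)
          + coneB11 A (coneB01 L A σ x v) u
        = - coneT1 A x (coneD1 L p0 u) v - coneT1 A x (coneD1 L p0 v) u) ∧
    -- n = 4 : coherence identities (l₄ = 0)
    (∀ x y z w : g0,
      coneB01 L A σ x (coneE (L.l3 y z w)) - coneB01 L A σ y (coneE (L.l3 x z w))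
          + coneB01 L A σ z (coneE (L.l3 x y w)) - coneB01 L A σ w (coneE (L.l3 x y z))
        = coneE (L.l3 (L.l2 x y) z w) - coneE (L.l3 (L.l2 x z) y w)
          + coneE (L.l3 (L.l2 x w) y z) + coneE (L.l3 (L.l2 y z) x w)
          - coneE (L.l3 (L.l2 y w) x z) + coneE (L.l3 (L.l2 z w) x y)) ∧
    (∀ (x y z : g0) (u : g1 × m0),
      A.r0' x (coneT1 A y z u) - A.r0' y (coneT1 A x z u) + A.r0' z (coneT1 A x y u)
          + coneB11 A (coneE (L.l3 x y z)) u
        = coneT1 A (L.l2 x y) z u - coneT1 A (L.l2 x z) y u + coneT1 A (L.l2 y z) x u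
          + coneT1 A y z (coneB01 L A σ x u) - coneT1 A x z (coneB01 L A σ y u)
          + coneT1 A x y (coneB01 L A σ z u)) ∧
    -- n = 5 : l³ ∘ l³ vanishes
    (∀ x1 x2 x3 x4 x5 : g0,
      coneT1 A x4 x5 (coneE (L.l3 x1 x2 x3)) - coneT1 A x3 x5 (coneE (L.l3 x1 x2 x4))
        + coneT1 A x3 x4 (coneE (L.l3 x1 x2 x5))
        + coneT1 A x2 x5 (coneE (L.l3 x1 x3 x4))
        - coneT1 A x2 x4 (coneE (L.l3 x1 x3 x5))
        + coneT1 A x2 x3 (coneE (L.l3 x1 x4 x5))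
        - coneT1 A x1 x5 (coneE (L.l3 x2 x3 x4))
        + coneT1 A x1 x4 (coneE (L.l3 x2 x3 x5))
        - coneT1 A x1 x3 (coneE (L.l3 x2 x4 x5))
        + coneT1 A x1 x2 (coneE (L.l3 x3 x4 x5)) = 0) := by
  have hA := hCM.isAction
  have hL := hCM.isLieTwoAlgebra_g
  exact ⟨hCM.isLinearMap_coneB01, hCM.isLinearMap_coneB01_left, hA.isLinearMap_coneB11,
    hA.isLinearMap_coneB11_left, hA.isLinearMap_coneT1, hA.isLinearMap_coneT1_middle,
    fun _ _ => add_comm _ _, hA.coneT1_antisymm,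
    hCM.coneD1_coneD2,
    hCM.coneD1_coneB01, hCM.coneD2_r0', hCM.r0'_coneD1, hCM.coneD2_coneB11,
    hL.jacobi, hA.r0'_jacobi p1, hCM.coneB01_jacobi, hCM.coneB01_jacobi_coneB11,
    hCM.coneB01_coherence, hA.coneT1_coherence hL,
    fun _ _ _ _ _ => by simp only [hA.coneT1_coneE, sub_zero, add_zero]⟩
end

section
/- In the mapping cone Lie 3-algebra of a crossed module of Lie 2-algebras, the Leibniz rule at degree mixing holds: for all a, b ∈ g₁ and α, β ∈ m₀, d_D⟦a+α, b+β⟧ = ⟦d_D(a+α), b+β⟧ − ⟦a+α, d_D(b+β)⟧, where ⟦a+α, b+β⟧ = a▷β + b▷α, d_D(a+α) = da + ϕ₀α, and ⟦x, a+α⟧ = l₂(x,a) − σ(x,α) + x▷α. -/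
universe u

variable (K : Type u) [Field K]
variable {g0 g1 h0 h1 m0 m1 : Type u}
  [AddCommGroup g0] [Module K g0] [AddCommGroup g1] [Module K g1]
  [AddCommGroup h0] [Module K h0] [AddCommGroup h1] [Module K h1]
  [AddCommGroup m0] [Module K m0] [AddCommGroup m1] [Module K m1]

variable {K}

variable (K)

/-- In the mapping cone of a crossed module of Lie 2-algebras, the
Leibniz rule at degree mixing holds: for `a,b ∈ g₁`, `α,β ∈ m₀`,
`d_D⟦a+α, b+β⟧ = ⟦d_D(a+α), b+β⟧ − ⟦a+α, d_D(b+β)⟧`, where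
`⟦a+α, b+β⟧ = a▷β + b▷α`, `d_D(a+α) = da + ϕ₀α`, `d_D ξ = −ϕ₁ξ + d̃ξ` and
`⟦x, a+α⟧ = l₂(x,a) − σ(x,α) + x▷α`.  (Here `⟦a+α, x⟧ = −⟦x, a+α⟧`, so the right-hand
side equals `⟦d_D(a+α), b+β⟧ + ⟦d_D(b+β), a+α⟧`.)  In components: -/
theorem mapping_cone_mixed_leibniz (L : LieTwoStr g0 g1) (M : LieTwoStr m0 m1)
    (A : TwoAction g0 g1 m0 m1) (lφ : g0 → m0 → m0 → m1)
    (p0 : m0 → g0) (p1 : m1 → g1) (p2 : m0 → m0 → g1) (σ : g0 → m0 → g1)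
    (hCM : IsCrossedModule K L M A lφ p0 p1 p2 σ) :
    ∀ (a b : g1) (α β : m0),
      -- g₁-component of d_D⟦a+α, b+β⟧ = ⟦d_D(a+α), b+β⟧ − ⟦a+α, d_D(b+β)⟧
      (- p1 (A.r1 a β + A.r1 b α)
        = (L.l2m (L.d a + p0 α) b - σ (L.d a + p0 α) β)
          + (L.l2m (L.d b + p0 β) a - σ (L.d b + p0 β) α)) ∧
      -- m₀-component
      (M.d (A.r1 a β + A.r1 b α)
        = A.r0 (L.d a + p0 α) β + A.r0 (L.d b + p0 β) α) := by
  obtain ⟨hL, hM, ⟨hAct, _⟩, hHom, hσlin, hσlin', hc1, hc2, hc3, hc4,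
    hi, hii, hiii, hiv, hlφ, hp2a, hp2b⟩ := hCM
  obtain ⟨hMd, _, _, _, _, _, _, _, hManti, _⟩ := hM
  obtain ⟨_, hr0x, _, _, _, _, _, _, _, _, _, hdr1, _⟩ := hAct
  obtain ⟨_, hp1, _⟩ := hHom
  obtain ⟨_, _, _, _, hl2mlin, _, _, _, _, _, _, _, hdd, _⟩ := hL
  have hp1' : ∀ u v : m1, p1 (u + v) = p1 u + p1 v := hp1.map_add
  intro a b α β
  constructor
  · have e1 := hc2 a β
    have e2 := hc2 b α
    have hl2mx : ∀ (x y : g0) (c : g1), L.l2m (x + y) c = L.l2m x c + L.l2m y c := by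
      intro x y c; exact (hl2mlin c).map_add x y
    have hσx : ∀ (x y : g0) (γ : m0), σ (x + y) γ = σ x γ + σ y γ := by
      intro x y γ; exact (hσlin' γ).map_add x y
    have h0 : σ (p0 α) β + σ (p0 β) α = 0 := by
      have := hp2a α β; have h2 := hp2b α β
      rw [this] at h2; rw [h2]; abel
    have hab : L.l2m (L.d a) b + L.l2m (L.d b) a = 0 := by
      rw [hdd a b]; abel
    rw [hp1', hl2mx, hl2mx, hσx, hσx]
    have ea : p1 (A.r1 a β) = σ (L.d a) β - L.l2m (p0 β) a := eq_sub_of_add_eq e1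
    have eb : p1 (A.r1 b α) = σ (L.d b) α - L.l2m (p0 α) b := eq_sub_of_add_eq e2
    have h0' : σ (p0 β) α = - σ (p0 α) β := eq_neg_of_add_eq_zero_right h0
    rw [ea, eb, hdd a b, h0']
    abel
  · rw [hMd.1, (hr0x β).1, (hr0x α).1, ← hdr1 a β, ← hdr1 b α, ← hi, ← hi]
    rw [hManti β α]
    abel
end

section
/- Let (m, g, φ, ϕ, σ) be a crossed module of Lie 2-algebras. If Im σ ⊆ Im ϕ₁, then Im ϕ is an ideal of g (i.e., l₂(Im ϕ ∧ g) ⊆ Im ϕ and l₃(Im ϕ₀ ∧ g₀ ∧ g₀) ⊆ Im ϕ₁), so h = g/Im ϕ is a quotient Lie 2-algebra. If moreover σ(ker ϕ₀ ∧ g₀) = 0, then the g-action on m restricts to ker ϕ and descends to a well-defined h-module structure on ker ϕ, independent of the choice of section of the projection π: g → h. -/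
universe u

variable (K : Type u) [Field K]
variable {g0 g1 h0 h1 m0 m1 : Type u}
  [AddCommGroup g0] [Module K g0] [AddCommGroup g1] [Module K g1]
  [AddCommGroup h0] [Module K h0] [AddCommGroup h1] [Module K h1]
  [AddCommGroup m0] [Module K m0] [AddCommGroup m1] [Module K m1]

variable {K}

variable (K)

/-- For a crossed module `(m,g,φ,ϕ,σ)`: if `Im σ ⊆ Im ϕ₁` then `Im ϕ`
is an ideal of `g` (so `h = g/Im ϕ` is a quotient Lie 2-algebra); if moreover
`σ(ker ϕ₀ ∧ g₀) = 0` then the `g`-action on `m` restricts to `ker ϕ` and elements of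
`Im ϕ` act trivially on `ker ϕ`, so the action descends to a well-defined `h`-module
structure on `ker ϕ` independent of the choice of section of `π : g → h`. -/
theorem image_ideal_and_kernel_module (L : LieTwoStr g0 g1) (M : LieTwoStr m0 m1)
    (A : TwoAction g0 g1 m0 m1) (lφ : g0 → m0 → m0 → m1)
    (p0 : m0 → g0) (p1 : m1 → g1) (p2 : m0 → m0 → g1) (σ : g0 → m0 → g1)
    (hCM : IsCrossedModule K L M A lφ p0 p1 p2 σ)
    (hσ : ∀ (x : g0) (α : m0), ∃ ξ : m1, p1 ξ = σ x α) :
    -- Im ϕ is an ideal of g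
    ((∀ ξ : m1, ∃ α : m0, p0 α = L.d (p1 ξ)) ∧
     (∀ (α : m0) (x : g0), ∃ β : m0, p0 β = L.l2 (p0 α) x) ∧
     (∀ (α : m0) (a : g1), ∃ ξ : m1, p1 ξ = L.l2m (p0 α) a) ∧
     (∀ (x : g0) (ξ : m1), ∃ η : m1, p1 η = L.l2m x (p1 ξ)) ∧
     (∀ (α : m0) (x y : g0), ∃ ξ : m1, p1 ξ = L.l3 (p0 α) x y)) ∧
    -- with σ(ker ϕ₀ ∧ g₀) = 0, the action restricts to ker ϕ and Im ϕ acts trivially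
    ((∀ x : g0, (∀ β : m0, p0 β = 0 → σ x β = 0)) →
      (∀ (x : g0) (β : m0), p0 β = 0 → p0 (A.r0 x β) = 0) ∧
      (∀ (x : g0) (ξ : m1), p1 ξ = 0 → p1 (A.r0' x ξ) = 0) ∧
      (∀ (a : g1) (β : m0), p0 β = 0 → p1 (A.r1 a β) = 0) ∧
      (∀ (x y : g0) (β : m0), p0 β = 0 → p1 (A.r2 x y β) = 0) ∧
      -- Im ϕ acts trivially on ker ϕ: the induced h-action is well defined
      (∀ (α : m0) (β : m0), p0 β = 0 → A.r0 (p0 α) β = 0) ∧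
      (∀ (α : m0) (ξ : m1), p1 ξ = 0 → A.r0' (p0 α) ξ = 0) ∧
      (∀ (η : m1) (β : m0), p0 β = 0 → A.r1 (p1 η) β = 0) ∧
      (∀ (x : g0) (α : m0) (β : m0), p0 β = 0 → A.r2 x (p0 α) β = 0) ∧
      (∀ (x : g0) (α : m0) (β : m0), p0 β = 0 → A.r2 (p0 α) x β = 0)) := by
  obtain ⟨hL, hM, hAD, hHom, hσl1, hσl2, h1, h2, h3, h4,
    c1, c2, c3, c4, c5, c6, c7⟩ := hCM
  obtain ⟨hLd, hLl2a, hLl2b, hLl2ma, hLl2mb, hLl3a, hLl3b, hLl3c,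
    hLas2, hLas3a, hLas3b, _, _, _, _, _⟩ := hL
  obtain ⟨_, _, _, _, _, _, _, _, hMas2, _, _, _, _, _, _, _⟩ := hM
  obtain ⟨hA, _, _, _, _, lφas, _, _⟩ := hAD
  obtain ⟨_, hAr0x, _, hAr0'x, _, hAr1a, _, hAr2y, hAr2x, hAr2as,
    _, _, _, _, _, _, _⟩ := hA
  obtain ⟨hp0lin, hp1lin, _, _, _, hpd0, _, _, _⟩ := hHom
  have hpd : ∀ ξ : m1, L.d (p1 ξ) = p0 (M.d ξ) := hpd0
  have hp0l : IsLinearMap K p0 := hp0lin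
  have hp1l : IsLinearMap K p1 := hp1lin
  -- ideal part, item (d), proved first for reuse
  have itemD : ∀ (x : g0) (ξ : m1), ∃ η : m1, p1 η = L.l2m x (p1 ξ) := by
    intro x ξ
    obtain ⟨ζ, hζ⟩ := hσ x (M.d ξ)
    refine ⟨A.r0' x ξ - ζ, ?_⟩
    rw [hp1l.map_sub, hζ, ← h3 x ξ]
    abel
  refine ⟨⟨?_, ?_, ?_, itemD, ?_⟩, ?_⟩
  · intro ξ
    exact ⟨M.d ξ, (hpd ξ).symm⟩
  · intro α x
    obtain ⟨ξ, hξ⟩ := hσ x α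
    refine ⟨M.d ξ - A.r0 x α, ?_⟩
    rw [hp0l.map_sub, ← hpd ξ, hξ, hLas2, ← h1 x α]
    abel
  · intro α a
    obtain ⟨η, hη⟩ := hσ (L.d a) α
    refine ⟨η - A.r1 a α, ?_⟩
    rw [hp1l.map_sub, hη, ← h2 a α]
    abel
  · intro α x y
    obtain ⟨u1, hu1⟩ := hσ y α
    obtain ⟨u2, hu2⟩ := hσ x α
    obtain ⟨u3, hu3⟩ := hσ (L.l2 x y) α
    obtain ⟨u4, hu4⟩ := hσ x (A.r0 y α)
    obtain ⟨u5, hu5⟩ := hσ y (A.r0 x α)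
    obtain ⟨w1, hw1⟩ := itemD x u1
    obtain ⟨w2, hw2⟩ := itemD y u2
    have e1 : L.l3 (p0 α) x y = L.l3 x y (p0 α) := by
      rw [hLas3a, hLas3b, neg_neg]
    have key := h4 x y α
    rw [← hu1, ← hu2, ← hu3, ← hu4, ← hu5, ← hw1, ← hw2] at key
    refine ⟨-w1 + w2 + u3 - u4 + u5 - A.r2 x y α, ?_⟩
    rw [e1]
    simp only [hp1l.map_sub, hp1l.map_add, hp1l.map_neg]
    rw [key]
    abel
  · intro hker
    have t1 : ∀ (x : g0) (β : m0), p0 β = 0 → p0 (A.r0 x β) = 0 := by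
      intro x β hβ
      have hl2 : L.l2 x (p0 β) = 0 := by rw [hβ]; exact (hLl2a x).map_zero
      have := h1 x β
      rw [hl2, hker x β hβ, hLd.map_zero, sub_zero] at this
      exact this
    have t3 : ∀ (a : g1) (β : m0), p0 β = 0 → p1 (A.r1 a β) = 0 := by
      intro a β hβ
      have hl2m : L.l2m (p0 β) a = 0 := by rw [hβ]; exact (hLl2mb a).map_zero
      have := h2 a β
      rw [hl2m, hker (L.d a) β hβ, add_zero] at this
      exact this
    have t2 : ∀ (x : g0) (ξ : m1), p1 ξ = 0 → p1 (A.r0' x ξ) = 0 := by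
      intro x ξ hξ
      have hdm : p0 (M.d ξ) = 0 := by rw [← hpd ξ, hξ, hLd.map_zero]
      have := h3 x ξ
      rw [hξ, (hLl2ma x).map_zero, sub_zero, hker x (M.d ξ) hdm] at this
      exact this
    have t4 : ∀ (x y : g0) (β : m0), p0 β = 0 → p1 (A.r2 x y β) = 0 := by
      intro x y β hβ
      have key := h4 x y β
      have hl3 : L.l3 x y (p0 β) = 0 := by rw [hβ]; exact (hLl3a x y).map_zero
      rw [hker y β hβ, hker x β hβ, hker (L.l2 x y) β hβ,
        hker x (A.r0 y β) (t1 y β hβ), hker y (A.r0 x β) (t1 x β hβ),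
        (hLl2ma x).map_zero, (hLl2ma y).map_zero, hl3] at key
      simpa using key.symm
    have t7 : ∀ (η : m1) (β : m0), p0 β = 0 → A.r1 (p1 η) β = 0 := by
      intro η β hβ
      rw [c3 η β, c2 β η, hβ]
      rw [(hAr0'x η).map_zero, neg_zero]
    refine ⟨t1, t2, t3, t4, ?_, ?_, t7, ?_, ?_⟩
    · intro α β hβ
      rw [← c1 α β, hMas2, c1 β α, hβ, (hAr0x α).map_zero, neg_zero]
    · intro α ξ hξ
      rw [← c2 α ξ]
      have := c3 ξ α
      rw [hξ, (hAr1a α).map_zero] at this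
      rw [← neg_eq_zero, ← this]
    · intro x α β hβ
      have hlφ : lφ x α β = 0 := by
        rw [lφas x α β, c5 x β α, hβ, hker x β hβ,
          (hAr2y x α).map_zero, (hAr1a α).map_zero]
        abel
      obtain ⟨ξ, hξ⟩ := hσ x α
      have hr1 : A.r1 (σ x α) β = 0 := by
        rw [← hξ, c3 ξ β, c2 β ξ, hβ, (hAr0'x ξ).map_zero, neg_zero]
      have := c5 x α β
      rw [hlφ, hr1, sub_zero] at this
      rw [← neg_eq_zero, ← this]
    · intro x α β hβ
      have h8 : A.r2 x (p0 α) β = 0 := by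
        have hlφ : lφ x α β = 0 := by
          rw [lφas x α β, c5 x β α, hβ, hker x β hβ,
            (hAr2y x α).map_zero, (hAr1a α).map_zero]
          abel
        obtain ⟨ξ, hξ⟩ := hσ x α
        have hr1 : A.r1 (σ x α) β = 0 := by
          rw [← hξ, c3 ξ β, c2 β ξ, hβ, (hAr0'x ξ).map_zero, neg_zero]
        have := c5 x α β
        rw [hlφ, hr1, sub_zero] at this
        rw [← neg_eq_zero, ← this]
      rw [hAr2as, h8, neg_zero]
end

section
/- Let 0 → V →p I →q Q → 0 be a short exact sequence of h-modules for a Lie 2-algebra h (regarded as trivial Lie 2-algebras), and let λ ∈ C²(h, Q) be a 2-cocycle, giving the abelian extension h ⊕_λ Q of h by Q. Define ϕ: I → h ⊕_λ Q by ϕ(v) = (0, q(v)) and let φ be the action of h ⊕_λ Q on I induced by the h-action on I (through the projection h ⊕_λ Q → h), with l_{φ₀} = 0. Then (I, h ⊕_λ Q, φ, ϕ) is a strong crossed module of Lie 2-algebras, yielding the 4-term exact sequence 0 → V → I → h ⊕_λ Q → h → 0. -/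
universe u

variable (K : Type u) [Field K]
variable {g0 g1 h0 h1 m0 m1 : Type u}
  [AddCommGroup g0] [Module K g0] [AddCommGroup g1] [Module K g1]
  [AddCommGroup h0] [Module K h0] [AddCommGroup h1] [Module K h1]
  [AddCommGroup m0] [Module K m0] [AddCommGroup m1] [Module K m1]

variable {K}

variable (K)

section Extension

variable (L : LieTwoStr g0 g1) (τ : TwoAction g0 g1 m0 m1) (pV : m1 → m0)
variable (lam0 : g1 → m0) (lam1 : g0 → g0 → m0) (lam2 : g0 → g1 → m1)
variable (lam3 : g0 → g0 → g0 → m1)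

/-! Components of the Lie 2-algebra coboundary `D^g λ` of a 2-cochain
`λ = (λ₀,λ₁,λ₂,λ₃) ∈ C²(g,V)` with values in the `g`-module `V = (m0, m1, pV, τ)`. -/

def D2c0 : g0 → g1 → m0 := fun x a =>
  τ.r0 x (lam0 a) - lam0 (L.l2m x a) + lam1 x (L.d a) - pV (lam2 x a)

def D2c1 : g1 → g1 → m1 := fun a b =>
  τ.r1 a (lam0 b) + τ.r1 b (lam0 a) - lam2 (L.d a) b - lam2 (L.d b) a

def D2c2 : g0 → g0 → g0 → m0 := fun x y z =>
  - lam0 (L.l3 x y z)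
    + (τ.r0 x (lam1 y z) - lam1 (L.l2 x y) z + τ.r0 y (lam1 z x)
        - lam1 (L.l2 y z) x + τ.r0 z (lam1 x y) - lam1 (L.l2 z x) y)
    - pV (lam3 x y z)

def D2c3 : g0 → g0 → g1 → m1 := fun x y a =>
  τ.r2 x y (lam0 a) + τ.r1 a (lam1 x y)
    + τ.r0' x (lam2 y a) - τ.r0' y (lam2 x a) - lam2 (L.l2 x y) a
    - lam2 y (L.l2m x a) + lam2 x (L.l2m y a) - lam3 x y (L.d a)

def D2c4 : g0 → g0 → g0 → g0 → m1 := fun x1 x2 x3 x4 =>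
  (τ.r2 x1 x2 (lam1 x3 x4) - τ.r2 x1 x3 (lam1 x2 x4) + τ.r2 x1 x4 (lam1 x2 x3)
      + τ.r2 x2 x3 (lam1 x1 x4) - τ.r2 x2 x4 (lam1 x1 x3) + τ.r2 x3 x4 (lam1 x1 x2))
    - lam2 x4 (L.l3 x1 x2 x3) + lam2 x3 (L.l3 x1 x2 x4)
    - lam2 x2 (L.l3 x1 x3 x4) + lam2 x1 (L.l3 x2 x3 x4)
    + τ.r0' x1 (lam3 x2 x3 x4) - τ.r0' x2 (lam3 x1 x3 x4)
    + τ.r0' x3 (lam3 x1 x2 x4) - τ.r0' x4 (lam3 x1 x2 x3)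
    - lam3 (L.l2 x1 x2) x3 x4 + lam3 (L.l2 x1 x3) x2 x4 - lam3 (L.l2 x1 x4) x2 x3
    - lam3 (L.l2 x2 x3) x1 x4 + lam3 (L.l2 x2 x4) x1 x3 - lam3 (L.l2 x3 x4) x1 x2

/-! The twisted complex `k ⊕_λ V` and the `λ`-twisted action of `g`, written on the
ambient spaces `g₀ × V₀` and `g₁ × V₁` (the `k`-components being constrained to lie
in the ideal `k`). -/

def tD : g1 × m1 → g0 × m0 := fun q => (L.d q.1, pV q.2 + lam0 q.1)

def tR0 : g0 → g0 × m0 → g0 × m0 := fun x p => (L.l2 x p.1, lam1 x p.1 + τ.r0 x p.2)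

def tR0' : g0 → g1 × m1 → g1 × m1 := fun x q => (L.l2m x q.1, lam2 x q.1 + τ.r0' x q.2)

def tR1 : g1 → g0 × m0 → g1 × m1 := fun a p => (- L.l2m p.1 a, lam2 p.1 a + τ.r1 a p.2)

def tR2 : g0 → g0 → g0 × m0 → g1 × m1 := fun x y p =>
  (- L.l3 x y p.1, - lam3 x y p.1 + τ.r2 x y p.2)

variable (k0 : Submodule K g0) (k1 : Submodule K g1)

/-- Condition (1): the coboundary `D^g λ` vanishes upon contraction with any element
of the ideal `k`. -/
def ContractVanish : Prop :=
  (∀ (x : g0) (a : g1), x ∈ k0 ∨ a ∈ k1 → D2c0 L τ pV lam0 lam1 lam2 x a = 0) ∧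
  (∀ a b : g1, a ∈ k1 ∨ b ∈ k1 → D2c1 L τ lam0 lam2 a b = 0) ∧
  (∀ x y z : g0, x ∈ k0 ∨ y ∈ k0 ∨ z ∈ k0 → D2c2 L τ pV lam0 lam1 lam3 x y z = 0) ∧
  (∀ (x y : g0) (a : g1), x ∈ k0 ∨ y ∈ k0 ∨ a ∈ k1 →
    D2c3 L τ lam0 lam1 lam2 lam3 x y a = 0) ∧
  (∀ x1 x2 x3 x4 : g0, x1 ∈ k0 ∨ x2 ∈ k0 ∨ x3 ∈ k0 ∨ x4 ∈ k0 →
    D2c4 L τ lam1 lam2 lam3 x1 x2 x3 x4 = 0)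

/-- Condition (2): `D^g λ = π*θ` for a 3-cochain `θ` on `h = g/k` (i.e. a 3-cochain on
`g` all of whose components kill arguments in `k`, hence factor through `π`). -/
def FactorsThroughPi : Prop :=
  ∃ (t0 : g0 → g1 → m0) (t1 : g1 → g1 → m1) (t2 : g0 → g0 → g0 → m0)
    (t3 : g0 → g0 → g1 → m1) (t4 : g0 → g0 → g0 → g0 → m1),
    (∀ x a, x ∈ k0 ∨ a ∈ k1 → t0 x a = 0) ∧
    (∀ a b, a ∈ k1 ∨ b ∈ k1 → t1 a b = 0) ∧
    (∀ x y z, x ∈ k0 ∨ y ∈ k0 ∨ z ∈ k0 → t2 x y z = 0) ∧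
    (∀ x y a, x ∈ k0 ∨ y ∈ k0 ∨ a ∈ k1 → t3 x y a = 0) ∧
    (∀ x1 x2 x3 x4, x1 ∈ k0 ∨ x2 ∈ k0 ∨ x3 ∈ k0 ∨ x4 ∈ k0 → t4 x1 x2 x3 x4 = 0) ∧
    (∀ x a, D2c0 L τ pV lam0 lam1 lam2 x a = t0 x a) ∧
    (∀ a b, D2c1 L τ lam0 lam2 a b = t1 a b) ∧
    (∀ x y z, D2c2 L τ pV lam0 lam1 lam3 x y z = t2 x y z) ∧
    (∀ x y a, D2c3 L τ lam0 lam1 lam2 lam3 x y a = t3 x y a) ∧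
    (∀ x1 x2 x3 x4, D2c4 L τ lam1 lam2 lam3 x1 x2 x3 x4 = t4 x1 x2 x3 x4)

/-- Condition (3): the `λ`-twisted maps define an action of `g` on `k ⊕_λ V`, i.e.
`φ^λ : g → End(k ⊕_λ V)` is a Lie 2-algebra homomorphism. -/
def TwistedIsAction : Prop :=
  (∀ (x : g0) (q : g1 × m1), q.1 ∈ k1 →
    tD L pV lam0 (tR0' L τ lam2 x q) = tR0 L τ lam1 x (tD L pV lam0 q)) ∧
  (∀ (a : g1) (p : g0 × m0), p.1 ∈ k0 →
    tR0 L τ lam1 (L.d a) p = tD L pV lam0 (tR1 L τ lam2 a p)) ∧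
  (∀ (a : g1) (q : g1 × m1), q.1 ∈ k1 →
    tR0' L τ lam2 (L.d a) q = tR1 L τ lam2 a (tD L pV lam0 q)) ∧
  (∀ (x y : g0) (p : g0 × m0), p.1 ∈ k0 →
    tR0 L τ lam1 (L.l2 x y) p - tR0 L τ lam1 x (tR0 L τ lam1 y p)
        + tR0 L τ lam1 y (tR0 L τ lam1 x p)
      = tD L pV lam0 (tR2 L τ lam3 x y p)) ∧
  (∀ (x y : g0) (q : g1 × m1), q.1 ∈ k1 →
    tR0' L τ lam2 (L.l2 x y) q - tR0' L τ lam2 x (tR0' L τ lam2 y q)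
        + tR0' L τ lam2 y (tR0' L τ lam2 x q)
      = tR2 L τ lam3 x y (tD L pV lam0 q)) ∧
  (∀ (x : g0) (a : g1) (p : g0 × m0), p.1 ∈ k0 →
    tR1 L τ lam2 (L.l2m x a) p - tR0' L τ lam2 x (tR1 L τ lam2 a p)
        + tR1 L τ lam2 a (tR0 L τ lam1 x p)
      = tR2 L τ lam3 x (L.d a) p) ∧
  (∀ (x y z : g0) (p : g0 × m0), p.1 ∈ k0 →
    tR0' L τ lam2 x (tR2 L τ lam3 y z p) - tR2 L τ lam3 y z (tR0 L τ lam1 x p)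
        + tR0' L τ lam2 y (tR2 L τ lam3 z x p) - tR2 L τ lam3 z x (tR0 L τ lam1 y p)
        + tR0' L τ lam2 z (tR2 L τ lam3 x y p) - tR2 L τ lam3 x y (tR0 L τ lam1 z p)
      = tR2 L τ lam3 (L.l2 x y) z p + tR2 L τ lam3 (L.l2 y z) x p
        + tR2 L τ lam3 (L.l2 z x) y p + tR1 L τ lam2 (L.l3 x y z) p)

end Extension

/-- The abelian extension `h ⊕_λ Q` of the Lie 2-algebra `h` by the `h`-module `Q`,
determined by a 2-cocycle `λ ∈ C²(h,Q)`. -/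
def extStr (H : LieTwoStr g0 g1) (τQ : TwoAction g0 g1 h0 h1) (pQ : h1 → h0)
    (lam0 : g1 → h0) (lam1 : g0 → g0 → h0) (lam2 : g0 → g1 → h1)
    (lam3 : g0 → g0 → g0 → h1) : LieTwoStr (g0 × h0) (g1 × h1) where
  d q := (H.d q.1, pQ q.2 + lam0 q.1)
  l2 p q := (H.l2 p.1 q.1, τQ.r0 p.1 q.2 - τQ.r0 q.1 p.2 + lam1 p.1 q.1)
  l2m p q := (H.l2m p.1 q.1, τQ.r0' p.1 q.2 - τQ.r1 q.1 p.2 + lam2 p.1 q.1)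
  l3 p q r := (H.l3 p.1 q.1 r.1,
    - τQ.r2 p.1 q.1 r.2 - τQ.r2 q.1 r.1 p.2 - τQ.r2 r.1 p.1 q.2 + lam3 p.1 q.1 r.1)


/-! ### Auxiliary linearity combinators -/

section Combinators
variable {K}
variable {A B C : Type u} [AddCommGroup A] [Module K A] [AddCommGroup B] [Module K B]
  [AddCommGroup C] [Module K C]

lemma ilPair {f : A → B} {g : A → C} (hf : IsLinearMap K f) (hg : IsLinearMap K g) :
    IsLinearMap K (fun a => (f a, g a)) := by
  constructor
  · intro x y; rw [Prod.mk_add_mk, hf.map_add, hg.map_add]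
  · intro c x; rw [Prod.smul_mk, hf.map_smul, hg.map_smul]

lemma ilFst {f : A → C} (hf : IsLinearMap K f) :
    IsLinearMap K (fun p : A × B => f p.1) :=
  ⟨fun _ _ => hf.map_add _ _, fun _ _ => hf.map_smul _ _⟩

lemma ilSnd {f : B → C} (hf : IsLinearMap K f) :
    IsLinearMap K (fun p : A × B => f p.2) :=
  ⟨fun _ _ => hf.map_add _ _, fun _ _ => hf.map_smul _ _⟩

lemma ilAdd {f g : A → B} (hf : IsLinearMap K f) (hg : IsLinearMap K g) :
    IsLinearMap K (fun a => f a + g a) := by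
  constructor
  · intro x y; rw [hf.map_add, hg.map_add]; abel
  · intro c x; rw [hf.map_smul, hg.map_smul, smul_add]

lemma ilNeg {f : A → B} (hf : IsLinearMap K f) :
    IsLinearMap K (fun a => - f a) := by
  constructor
  · intro x y; rw [hf.map_add]; abel
  · intro c x; rw [hf.map_smul, smul_neg]

lemma ilSub {f g : A → B} (hf : IsLinearMap K f) (hg : IsLinearMap K g) :
    IsLinearMap K (fun a => f a - g a) := by
  constructor
  · intro x y; rw [hf.map_add, hg.map_add]; abel
  · intro c x; rw [hf.map_smul, hg.map_smul, smul_sub]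

lemma ilZero : IsLinearMap K (fun _ : A => (0 : B)) :=
  ⟨fun _ _ => by simp, fun _ _ => by simp⟩

end Combinators

/-! ### The abelian extension is a Lie 2-algebra -/

lemma extIsLieTwo (H : LieTwoStr g0 g1) (hH : IsLieTwoAlgebra K H)
    (pQ : h1 → h0) (hpQ : IsLinearMap K pQ)
    (τQ : TwoAction g0 g1 h0 h1) (hτQ : IsAction K H pQ τQ)
    (lam0 : g1 → h0) (lam1 : g0 → g0 → h0) (lam2 : g0 → g1 → h1)
    (lam3 : g0 → g0 → g0 → h1)
    (hlin0 : IsLinearMap K lam0)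
    (hlin1 : ∀ x, IsLinearMap K (lam1 x)) (hlin1' : ∀ y, IsLinearMap K (fun x => lam1 x y))
    (hlin2 : ∀ x, IsLinearMap K (lam2 x)) (hlin2' : ∀ a, IsLinearMap K (fun x => lam2 x a))
    (hlin3 : ∀ x y, IsLinearMap K (lam3 x y))
    (hlin3' : ∀ x z, IsLinearMap K (fun y => lam3 x y z))
    (hlin3'' : ∀ y z, IsLinearMap K (fun x => lam3 x y z))
    (hskew1 : ∀ x y, lam1 x y = - lam1 y x)
    (hskew3 : ∀ x y z, lam3 x y z = - lam3 y x z ∧ lam3 x y z = - lam3 x z y)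
    (hcoc0 : ∀ x a, D2c0 H τQ pQ lam0 lam1 lam2 x a = 0)
    (hcoc1 : ∀ a b, D2c1 H τQ lam0 lam2 a b = 0)
    (hcoc2 : ∀ x y z, D2c2 H τQ pQ lam0 lam1 lam3 x y z = 0)
    (hcoc3 : ∀ x y a, D2c3 H τQ lam0 lam1 lam2 lam3 x y a = 0)
    (hcoc4 : ∀ x1 x2 x3 x4, D2c4 H τQ lam1 lam2 lam3 x1 x2 x3 x4 = 0) :
    IsLieTwoAlgebra K (extStr H τQ pQ lam0 lam1 lam2 lam3) := by
  obtain ⟨hd, hl2a, hl2b, hl2ma, hl2mb, hl3a, hl3b, hl3c, hsk2, hsk3a, hsk3b,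
    hdm, hmd, hdl3, hl3d, hjac⟩ := hH
  obtain ⟨ar0a, ar0b, ar0'a, ar0'b, ar1a, ar1b, ar2a, ar2b, ar2c, ask,
    adr0', ar0d, ar0'd, abr0, abr0', abr1, abig⟩ := hτQ
  refine ⟨?_, ?_, ?_, ?_, ?_, ?_, ?_, ?_, ?_, ?_, ?_, ?_, ?_, ?_, ?_, ?_⟩
  · -- d linear
    exact ilPair (ilFst hd) (ilAdd (ilSnd hpQ) (ilFst hlin0))
  · -- l2 linear in 2nd
    intro p
    exact ilPair (ilFst (hl2a p.1))
      (ilAdd (ilSub (ilSnd (ar0a p.1)) (ilFst (ar0b p.2))) (ilFst (hlin1 p.1)))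
  · -- l2 linear in 1st
    intro q
    exact ilPair (ilFst (hl2b q.1))
      (ilAdd (ilSub (ilFst (ar0b q.2)) (ilSnd (ar0a q.1))) (ilFst (hlin1' q.1)))
  · -- l2m linear in 2nd
    intro p
    exact ilPair (ilFst (hl2ma p.1))
      (ilAdd (ilSub (ilSnd (ar0'a p.1)) (ilFst (ar1b p.2))) (ilFst (hlin2 p.1)))
  · -- l2m linear in 1st
    intro q
    exact ilPair (ilFst (hl2mb q.1))
      (ilAdd (ilSub (ilFst (ar0'b q.2)) (ilSnd (ar1a q.1))) (ilFst (hlin2' q.1)))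
  · -- l3 linear in 3rd
    intro p q
    exact ilPair (ilFst (hl3a p.1 q.1))
      (ilAdd (ilSub (ilSub (ilNeg (ilSnd (ar2a p.1 q.1)))
          (ilFst (ar2b q.1 p.2))) (ilFst (ar2c p.1 q.2)))
        (ilFst (hlin3 p.1 q.1)))
  · -- l3 linear in 2nd
    intro p r
    exact ilPair (ilFst (hl3b p.1 r.1))
      (ilAdd (ilSub (ilSub (ilNeg (ilFst (ar2b p.1 r.2)))
          (ilFst (ar2c r.1 p.2))) (ilSnd (ar2a r.1 p.1)))
        (ilFst (hlin3' p.1 r.1)))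
  · -- l3 linear in 1st
    intro q r
    exact ilPair (ilFst (hl3c q.1 r.1))
      (ilAdd (ilSub (ilSub (ilNeg (ilFst (ar2c q.1 r.2)))
          (ilSnd (ar2a q.1 r.1))) (ilFst (ar2b r.1 q.2)))
        (ilFst (hlin3'' q.1 r.1)))
  · -- l2 skew
    intro p q
    refine Prod.ext (hsk2 p.1 q.1) ?_
    simp only [extStr, Prod.snd_neg]
    rw [hskew1 p.1 q.1]; abel
  · -- l3 skew 12
    intro p q r
    refine Prod.ext (hsk3a p.1 q.1 r.1) ?_
    simp only [extStr, Prod.snd_neg]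
    rw [(hskew3 p.1 q.1 r.1).1, ask p.1 q.1 r.2, ask q.1 r.1 p.2, ask r.1 p.1 q.2]; abel
  · -- l3 skew 23
    intro p q r
    refine Prod.ext (hsk3b p.1 q.1 r.1) ?_
    simp only [extStr, Prod.snd_neg]
    rw [(hskew3 p.1 q.1 r.1).2, ask p.1 q.1 r.2, ask q.1 r.1 p.2, ask r.1 p.1 q.2]; abel
  · -- d (l2m) = l2 d  (uses D2c0)
    intro p q
    refine Prod.ext (hdm p.1 q.1) ?_
    simp only [extStr]
    have e3 := hcoc0 p.1 q.1
    simp only [D2c0] at e3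
    simp only [hpQ.map_add, hpQ.map_sub, (ar0a p.1).map_add]
    linear_combination (norm := abel) (adr0' p.1 q.2) + (ar0d q.1 p.2) - e3
  · -- l2m (d a) b = - l2m (d b) a  (uses D2c1)
    intro q r
    refine Prod.ext (hmd q.1 r.1) ?_
    simp only [extStr, Prod.snd_neg]
    have e3 := hcoc1 q.1 r.1
    simp only [D2c1] at e3
    simp only [(ar1a q.1).map_add, (ar1a r.1).map_add]
    linear_combination (norm := abel) (ar0'd q.1 r.2) + (ar0'd r.1 q.2) - e3
  · -- d (l3) = jacobi of l2  (uses D2c2)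
    intro p q r
    refine Prod.ext (hdl3 p.1 q.1 r.1) ?_
    simp only [extStr, Prod.snd_sub]
    have e2 := hcoc2 p.1 q.1 r.1
    simp only [D2c2] at e2
    have f1 : τQ.r0 (H.l2 p.1 r.1) q.2 = - τQ.r0 (H.l2 r.1 p.1) q.2 := by
      rw [hsk2 p.1 r.1]; exact (ar0b q.2).map_neg _
    have f2 : τQ.r0 q.1 (lam1 p.1 r.1) = - τQ.r0 q.1 (lam1 r.1 p.1) := by
      rw [hskew1 p.1 r.1]; exact (ar0a q.1).map_neg _
    have f3 : lam1 q.1 (H.l2 p.1 r.1) = - lam1 q.1 (H.l2 r.1 p.1) := by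
      rw [hsk2 p.1 r.1]; exact (hlin1 q.1).map_neg _
    simp only [hpQ.map_add, hpQ.map_sub, hpQ.map_neg, (ar0a p.1).map_add,
      (ar0a p.1).map_sub, (ar0a q.1).map_add, (ar0a q.1).map_sub,
      (ar0a r.1).map_add, (ar0a r.1).map_sub]
    linear_combination (norm := abel) abr0 p.1 q.1 r.2 + abr0 q.1 r.1 p.2
      + abr0 r.1 p.1 q.2 - e2 - f1 + f2 + f3
      - hskew1 p.1 (H.l2 q.1 r.1) - hskew1 q.1 (H.l2 r.1 p.1)
  · -- l3 x y (d a)  (uses D2c3)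
    intro p q r
    refine Prod.ext (hl3d p.1 q.1 r.1) ?_
    simp only [extStr, Prod.snd_sub]
    have e3 := hcoc3 p.1 q.1 r.1
    simp only [D2c3] at e3
    have f1 : τQ.r2 (H.d r.1) p.1 q.2 = - τQ.r2 p.1 (H.d r.1) q.2 :=
      ask (H.d r.1) p.1 q.2
    simp only [(ar2a p.1 q.1).map_add, (ar0'a p.1).map_add, (ar0'a p.1).map_sub,
      (ar0'a q.1).map_add, (ar0'a q.1).map_sub, (ar1a r.1).map_add,
      (ar1a r.1).map_sub]
    linear_combination (norm := abel) abr0' p.1 q.1 r.2 - abr1 p.1 r.1 q.2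
      + abr1 q.1 r.1 p.2 - e3 - f1
  · -- big jacobiator  (uses D2c4)
    intro p q r s
    refine Prod.ext (hjac p.1 q.1 r.1 s.1) ?_
    simp only [extStr, Prod.snd_sub, Prod.snd_add]
    have e4 := hcoc4 p.1 q.1 r.1 s.1
    simp only [D2c4] at e4
    simp only [(ar0'a p.1).map_add, (ar0'a p.1).map_sub, (ar0'a p.1).map_neg,
      (ar0'a q.1).map_add, (ar0'a q.1).map_sub, (ar0'a q.1).map_neg,
      (ar0'a r.1).map_add, (ar0'a r.1).map_sub, (ar0'a r.1).map_neg,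
      (ar0'a s.1).map_add, (ar0'a s.1).map_sub, (ar0'a s.1).map_neg,
      (ar2a p.1 q.1).map_add, (ar2a p.1 q.1).map_sub,
      (ar2a p.1 r.1).map_add, (ar2a p.1 r.1).map_sub,
      (ar2a p.1 s.1).map_add, (ar2a p.1 s.1).map_sub,
      (ar2a q.1 r.1).map_add, (ar2a q.1 r.1).map_sub,
      (ar2a q.1 s.1).map_add, (ar2a q.1 s.1).map_sub,
      (ar2a r.1 s.1).map_add, (ar2a r.1 s.1).map_sub]
    have A1 : τQ.r0' r.1 (τQ.r2 q.1 s.1 p.2) = - τQ.r0' r.1 (τQ.r2 s.1 q.1 p.2) := by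
      rw [ask q.1 s.1 p.2]; exact (ar0'a r.1).map_neg _
    have A4 : τQ.r2 r.1 (H.l2 q.1 s.1) p.2 = τQ.r2 (H.l2 s.1 q.1) r.1 p.2 := by
      rw [ask r.1 (H.l2 q.1 s.1) p.2, hsk2 q.1 s.1, (ar2c r.1 p.2).map_neg, neg_neg]
    have B1 : τQ.r0' s.1 (τQ.r2 r.1 p.1 q.2) = - τQ.r0' s.1 (τQ.r2 p.1 r.1 q.2) := by
      rw [ask r.1 p.1 q.2]; exact (ar0'a s.1).map_neg _
    have B4 : τQ.r2 r.1 (H.l2 p.1 s.1) q.2 = τQ.r2 (H.l2 s.1 p.1) r.1 q.2 := by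
      rw [ask r.1 (H.l2 p.1 s.1) q.2, hsk2 p.1 s.1, (ar2c r.1 q.2).map_neg, neg_neg]
    have C1 : τQ.r0' p.1 (τQ.r2 s.1 q.1 r.2) = - τQ.r0' p.1 (τQ.r2 q.1 s.1 r.2) := by
      rw [ask s.1 q.1 r.2]; exact (ar0'a p.1).map_neg _
    have C4 : τQ.r2 (H.l2 p.1 s.1) q.1 r.2 = - τQ.r2 (H.l2 s.1 p.1) q.1 r.2 := by
      rw [hsk2 p.1 s.1]; exact (ar2c q.1 r.2).map_neg _
    have D1 : τQ.r0' q.1 (τQ.r2 p.1 r.1 s.2) = - τQ.r0' q.1 (τQ.r2 r.1 p.1 s.2) := by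
      rw [ask p.1 r.1 s.2]; exact (ar0'a q.1).map_neg _
    have D3 : τQ.r2 (H.l2 p.1 r.1) q.1 s.2 = - τQ.r2 (H.l2 r.1 p.1) q.1 s.2 := by
      rw [hsk2 p.1 r.1]; exact (ar2c q.1 s.2).map_neg _
    linear_combination (norm := abel) - abig p.1 q.1 r.1 s.2 + e4
      + abig q.1 r.1 s.1 p.2 - A1 + ask q.1 s.1 (τQ.r0 r.1 p.2)
        + ask s.1 (H.l2 q.1 r.1) p.2 - A4 + ask q.1 (H.l2 r.1 s.1) p.2
      - abig p.1 r.1 s.1 q.2 + B1 - ask p.1 s.1 (τQ.r0 r.1 q.2)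
        - ask s.1 (H.l2 p.1 r.1) q.2 + B4
      + abig p.1 q.1 s.1 r.2 - C1 + ask p.1 s.1 (τQ.r0 q.1 r.2)
        + ask s.1 (H.l2 p.1 q.1) r.2 + C4
      + D1 - ask r.1 p.1 (τQ.r0 q.1 s.2) - D3

/-- Given a short exact sequence `0 → V →p I →q Q → 0` of `h`-modules
and a 2-cocycle `λ ∈ C²(h,Q)` with associated abelian extension `h ⊕_λ Q`, the maps
`ϕ(v) = (0, q(v))` and the action of `h ⊕_λ Q` on `I` through `h` (with `l_{φ₀} = 0`)
make `(I, h ⊕_λ Q, φ, ϕ)` a strong crossed module of Lie 2-algebras, yielding the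
4-term exact sequence `0 → V → I → h ⊕_λ Q → h → 0`. -/
theorem splice_strong_crossed_module {v0 v1 : Type u}
    [AddCommGroup v0] [Module K v0] [AddCommGroup v1] [Module K v1]
    (H : LieTwoStr g0 g1) (hH : IsLieTwoAlgebra K H)
    -- the h-modules V = (v0,v1), I = (m0,m1), Q = (h0,h1)
    (pV : v1 → v0) (pI : m1 → m0) (pQ : h1 → h0)
    (hpI : IsLinearMap K pI) (hpQ : IsLinearMap K pQ) (hpV : IsLinearMap K pV)
    (τV : TwoAction g0 g1 v0 v1) (τI : TwoAction g0 g1 m0 m1)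
    (τQ : TwoAction g0 g1 h0 h1)
    (hτV : IsAction K H pV τV) (hτI : IsAction K H pI τI) (hτQ : IsAction K H pQ τQ)
    -- the chain maps p : V → I and q : I → Q, h-equivariant
    (p0 : v0 → m0) (p1 : v1 → m1) (q0 : m0 → h0) (q1 : m1 → h1)
    (hp0 : IsLinearMap K p0) (hp1 : IsLinearMap K p1)
    (hq0 : IsLinearMap K q0) (hq1 : IsLinearMap K q1)
    (hpchain : ∀ v : v1, p0 (pV v) = pI (p1 v))
    (hqchain : ∀ ι : m1, q0 (pI ι) = pQ (q1 ι))
    (hpeq0 : ∀ (x : g0) (v : v0), p0 (τV.r0 x v) = τI.r0 x (p0 v))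
    (hpeq0' : ∀ (x : g0) (v : v1), p1 (τV.r0' x v) = τI.r0' x (p1 v))
    (hpeq1 : ∀ (a : g1) (v : v0), p1 (τV.r1 a v) = τI.r1 a (p0 v))
    (hpeq2 : ∀ (x y : g0) (v : v0), p1 (τV.r2 x y v) = τI.r2 x y (p0 v))
    (hqeq0 : ∀ (x : g0) (ι : m0), q0 (τI.r0 x ι) = τQ.r0 x (q0 ι))
    (hqeq0' : ∀ (x : g0) (ι : m1), q1 (τI.r0' x ι) = τQ.r0' x (q1 ι))
    (hqeq1 : ∀ (a : g1) (ι : m0), q1 (τI.r1 a ι) = τQ.r1 a (q0 ι))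
    (hqeq2 : ∀ (x y : g0) (ι : m0), q1 (τI.r2 x y ι) = τQ.r2 x y (q0 ι))
    -- exactness of 0 → V → I → Q → 0
    (hpinj0 : Function.Injective p0) (hpinj1 : Function.Injective p1)
    (hqsurj0 : Function.Surjective q0) (hqsurj1 : Function.Surjective q1)
    (hexact0 : ∀ ι : m0, q0 ι = 0 ↔ ∃ v, p0 v = ι)
    (hexact1 : ∀ ι : m1, q1 ι = 0 ↔ ∃ v, p1 v = ι)
    -- the 2-cocycle λ ∈ C²(h,Q)
    (lam0 : g1 → h0) (lam1 : g0 → g0 → h0) (lam2 : g0 → g1 → h1)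
    (lam3 : g0 → g0 → g0 → h1)
    (hlin0 : IsLinearMap K lam0)
    (hlin1 : ∀ x, IsLinearMap K (lam1 x)) (hlin1' : ∀ y, IsLinearMap K (fun x => lam1 x y))
    (hlin2 : ∀ x, IsLinearMap K (lam2 x)) (hlin2' : ∀ a, IsLinearMap K (fun x => lam2 x a))
    (hlin3 : ∀ x y, IsLinearMap K (lam3 x y))
    (hlin3' : ∀ x z, IsLinearMap K (fun y => lam3 x y z))
    (hlin3'' : ∀ y z, IsLinearMap K (fun x => lam3 x y z))
    (hskew1 : ∀ x y, lam1 x y = - lam1 y x)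
    (hskew3 : ∀ x y z, lam3 x y z = - lam3 y x z ∧ lam3 x y z = - lam3 x z y)
    (hcoc0 : ∀ x a, D2c0 H τQ pQ lam0 lam1 lam2 x a = 0)
    (hcoc1 : ∀ a b, D2c1 H τQ lam0 lam2 a b = 0)
    (hcoc2 : ∀ x y z, D2c2 H τQ pQ lam0 lam1 lam3 x y z = 0)
    (hcoc3 : ∀ x y a, D2c3 H τQ lam0 lam1 lam2 lam3 x y a = 0)
    (hcoc4 : ∀ x1 x2 x3 x4, D2c4 H τQ lam1 lam2 lam3 x1 x2 x3 x4 = 0) :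
    -- the abelian extension h ⊕_λ Q is a Lie 2-algebra
    IsLieTwoAlgebra K (extStr H τQ pQ lam0 lam1 lam2 lam3) ∧
    -- (I, h ⊕_λ Q, φ, ϕ) is a strong crossed module (σ = 0, ϕ₂ = 0, l_{φ₀} = 0)
    IsCrossedModule K (extStr H τQ pQ lam0 lam1 lam2 lam3) (abelianTwo pI)
      ⟨fun p ι => τI.r0 p.1 ι, fun p ι => τI.r0' p.1 ι,
        fun q ι => τI.r1 q.1 ι, fun p q ι => τI.r2 p.1 q.1 ι⟩
      (fun _ _ _ => 0)
      (fun ι => ((0 : g0), q0 ι)) (fun ι => ((0 : g1), q1 ι))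
      (fun _ _ => ((0 : g1), (0 : h1))) (fun _ _ => ((0 : g1), (0 : h1))) ∧
    -- exactness of 0 → V → I → h ⊕_λ Q → h → 0
    (∀ ι : m0, ((0 : g0), q0 ι) = ((0 : g0), (0 : h0)) ↔ ∃ v, p0 v = ι) ∧
    (∀ ι : m1, ((0 : g1), q1 ι) = ((0 : g1), (0 : h1)) ↔ ∃ v, p1 v = ι) ∧
    (∀ e : g0 × h0, (∃ ι : m0, ((0 : g0), q0 ι) = e) ↔ e.1 = 0) ∧
    (∀ e : g1 × h1, (∃ ι : m1, ((0 : g1), q1 ι) = e) ↔ e.1 = 0) ∧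
    Function.Surjective (Prod.fst : g0 × h0 → g0) := by
  have hext := extIsLieTwo K H hH pQ hpQ τQ hτQ lam0 lam1 lam2 lam3 hlin0 hlin1
    hlin1' hlin2 hlin2' hlin3 hlin3' hlin3'' hskew1 hskew3 hcoc0 hcoc1 hcoc2
    hcoc3 hcoc4
  obtain ⟨hd, hl2a, hl2b, hl2ma, hl2mb, hl3a, hl3b, hl3c, hsk2, hsk3a, hsk3b,
    hdm, hmd, hdl3, hl3d, hjac⟩ := hH
  obtain ⟨ar0a, ar0b, ar0'a, ar0'b, ar1a, ar1b, ar2a, ar2b, ar2c, ask,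
    adr0', ar0d, ar0'd, abr0, abr0', abr1, abig⟩ := hτQ
  obtain ⟨ir0a, ir0b, ir0'a, ir0'b, ir1a, ir1b, ir2a, ir2b, ir2c, iask,
    iadr0', iar0d, iar0'd, iabr0, iabr0', iabr1, iabig⟩ := hτI
  refine ⟨hext, ⟨hext, ?_, ?_, ?_, ?_, ?_, ?_, ?_, ?_, ?_, ?_, ?_, ?_, ?_, ?_,
    ?_, ?_⟩, ?_, ?_, ?_, ?_, ?_⟩
  · -- abelianTwo pI is a Lie 2-algebra
    exact ⟨hpI, fun _ => ilZero, fun _ => ilZero, fun _ => ilZero, fun _ => ilZero,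
      fun _ _ => ilZero, fun _ _ => ilZero, fun _ _ => ilZero,
      fun _ _ => by simp [abelianTwo], fun _ _ _ => by simp [abelianTwo],
      fun _ _ _ => by simp [abelianTwo],
      fun _ _ => by simp [abelianTwo, hpI.map_zero],
      fun _ _ => by simp [abelianTwo],
      fun _ _ _ => by simp [abelianTwo, hpI.map_zero],
      fun _ _ _ => by simp [abelianTwo, hpI.map_zero],
      fun _ _ _ _ => by simp [abelianTwo]⟩
  · -- action by derivations
    refine ⟨⟨fun x => ir0a x.1, fun α => ilFst (ir0b α), fun x => ir0'a x.1,
      fun ξ => ilFst (ir0'b ξ), fun a => ir1a a.1, fun α => ilFst (ir1b α),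
      fun x y => ir2a x.1 y.1, fun x α => ilFst (ir2b x.1 α),
      fun y α => ilFst (ir2c y.1 α), fun x y α => iask x.1 y.1 α,
      fun x ξ => iadr0' x.1 ξ, fun a α => iar0d a.1 α, fun a ξ => iar0'd a.1 ξ,
      fun x y α => iabr0 x.1 y.1 α, fun x y ξ => iabr0' x.1 y.1 ξ,
      fun x a α => iabr1 x.1 a.1 α, fun x y z α => iabig x.1 y.1 z.1 α⟩,
      ?_, fun _ _ => ilZero, fun _ _ => ilZero, fun _ _ => ilZero,
      fun _ _ _ => by simp, ?_, ?_⟩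
    · -- derivation property
      intro x
      refine ⟨fun ξ => iadr0' x.1 ξ, ?_, ?_, ?_⟩
      · intro α β
        simp [abelianTwo, hpI.map_zero, (ir0a x.1).map_zero]
      · intro α ξ
        simp [abelianTwo, (ir0'a x.1).map_zero]
      · intro α β γ
        simp [abelianTwo, (ir0'a x.1).map_zero]
    · intro a α β
      simp [abelianTwo, (ir1a a.1).map_zero]
    · intro x y α β
      simp [abelianTwo, (ir0'a x.1).map_zero, (ir0'a y.1).map_zero,
        (ir2a x.1 y.1).map_zero]
  · -- IsHom (abelianTwo pI) → extStr
    refine ⟨ilPair ilZero hq0, ilPair ilZero hq1, fun _ => ilZero,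
      fun _ => ilZero, fun _ _ => by simp [Prod.ext_iff], ?_, ?_, ?_, ?_⟩
    · intro a
      refine Prod.ext ?_ ?_ <;> simp only [extStr, abelianTwo]
      · exact hd.map_zero
      · rw [hlin0.map_zero, add_zero, hqchain a]
    · intro x y
      refine Prod.ext ?_ ?_ <;>
        simp [extStr, abelianTwo, hq0.map_zero, hd.map_zero, hpQ.map_zero,
          hlin0.map_zero, (hl2b (0 : g0)).map_zero, (ar0b (q0 x)).map_zero,
          (ar0b (q0 y)).map_zero, (hlin1 (0 : g0)).map_zero]
    · intro x a
      refine Prod.ext ?_ ?_ <;>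
        simp [extStr, abelianTwo, hq1.map_zero, (hl2mb (0 : g1)).map_zero,
          (ar0'b (q1 a)).map_zero, (ar1b (q0 x)).map_zero,
          (hlin2 (0 : g0)).map_zero]
    · intro x y z
      refine Prod.ext ?_ ?_ <;>
        simp [extStr, abelianTwo, hq1.map_zero, (hl2mb (0 : g1)).map_zero,
          (hl3a (0 : g0) (0 : g0)).map_zero, (ar0'b (0 : h1)).map_zero,
          (ar1b (q0 x)).map_zero, (ar1b (q0 y)).map_zero, (ar1b (q0 z)).map_zero,
          (hlin2 (0 : g0)).map_zero, (ar2b (0 : g0) (q0 z)).map_zero,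
          (ar2c (0 : g0) (q0 x)).map_zero, (ar2b (0 : g0) (q0 y)).map_zero,
          (ar2c (0 : g0) (q0 y)).map_zero, (hlin3 (0 : g0) (0 : g0)).map_zero]
  · -- σ linear in second argument
    exact fun _ => ilZero
  · -- σ linear in first argument
    exact fun _ => ilZero
  · -- Π-hom condition 1
    intro x α
    refine Prod.ext ?_ ?_ <;>
      simp [extStr, (hl2a x.1).map_zero, hd.map_zero, hqeq0 x.1 α,
        (ar0b x.2).map_zero, (hlin1 x.1).map_zero, hpQ.map_zero, hlin0.map_zero]
  · -- Π-hom condition 2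
    intro a α
    refine Prod.ext ?_ ?_ <;>
      simp [extStr, (hl2mb a.1).map_zero, hqeq1 a.1 α, (ar0'b a.2).map_zero,
        (hlin2' a.1).map_zero]
  · -- Π-hom condition 3
    intro x ξ
    refine Prod.ext ?_ ?_ <;>
      simp [extStr, abelianTwo, (hl2ma x.1).map_zero, hqeq0' x.1 ξ,
        (ar1b x.2).map_zero, (hlin2 x.1).map_zero]
  · -- Π-hom condition 4
    intro x y α
    refine Prod.ext ?_ ?_ <;>
      simp [extStr, (hl2ma x.1).map_zero, (hl2ma y.1).map_zero,
        (hl3a x.1 y.1).map_zero, hqeq2 x.1 y.1 α, (ar0'a x.1).map_zero,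
        (ar0'a y.1).map_zero, (ar1b x.2).map_zero, (ar1b y.2).map_zero,
        (hlin2 x.1).map_zero, (hlin2 y.1).map_zero, (ar2b y.1 x.2).map_zero,
        (ar2c x.1 y.2).map_zero, (hlin3 x.1 y.1).map_zero]
  · -- (i)
    intro α β
    simp [abelianTwo, (ir0b β).map_zero]
  · -- (ii)
    intro α ξ
    simp [abelianTwo, (ir0'b ξ).map_zero]
  · -- (iii)
    intro ξ α
    simp [abelianTwo, (ir1b α).map_zero]
  · -- (iv)
    intro α β γ
    simp [abelianTwo, (ir2c (0 : g0) γ).map_zero, (ir1b γ).map_zero]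
  · -- (v)
    intro x β γ
    simp [(ir2b x.1 γ).map_zero, (ir1b γ).map_zero]
  · -- (vi)
    intro α β; rfl
  · -- (vii)
    intro α β; simp [Prod.ext_iff]
  · -- exactness at I degree 0
    intro ι
    constructor
    · intro h
      exact (hexact0 ι).1 (congrArg Prod.snd h)
    · intro h
      exact Prod.ext rfl ((hexact0 ι).2 h)
  · -- exactness at I degree 1
    intro ι
    constructor
    · intro h
      exact (hexact1 ι).1 (congrArg Prod.snd h)
    · intro h
      exact Prod.ext rfl ((hexact1 ι).2 h)
  · -- image of q in degree 0
    intro e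
    constructor
    · rintro ⟨ι, rfl⟩; rfl
    · intro h
      obtain ⟨ι, hι⟩ := hqsurj0 e.2
      exact ⟨ι, Prod.ext h.symm hι⟩
  · -- image of q in degree 1
    intro e
    constructor
    · rintro ⟨ι, rfl⟩; rfl
    · intro h
      obtain ⟨ι, hι⟩ := hqsurj1 e.2
      exact ⟨ι, Prod.ext h.symm hι⟩
  · -- fst surjective
    exact fun x => ⟨(x, 0), rfl⟩
end
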